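/- arXiv:math/0609793 — 8 statements merged into one kernel-verified Lean document; each statement's English description precedes it below -/
import Mathlib

section
/- If O is a maximal order of ℍ(K) containing the order L = O_K + i·O_K + j·O_K + k·O_K, then 2q ∈ L for every q ∈ O. -/
/-!
For `q ∈ O` the products `q i`, `q j`, `q k` lie in `O`, so their reduced traces
`2 re (q i) = -2 q₁`, `2 re (q j) = -2 q₂`, `2 re (q k) = -2 q₃` are algebraic integers.
-/

open Quaternion NumberField

namespace Quaternion

variable {R : Type*} [CommRing R] {q u : ℍ[R]}

/- The units are passed through an equation because `⟨0, 1, 0, 0⟩` elaborates at type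
`ℍ[R,-1,-1]`, on which `*` of `ℍ[R]` is not found by instance search. -/
theorem re_mul_eq_neg_imI (hu : u = ⟨0, 1, 0, 0⟩) : (q * u).re = -q.imI := by
  rw [re_mul, hu]; simp

theorem re_mul_eq_neg_imJ (hu : u = ⟨0, 0, 1, 0⟩) : (q * u).re = -q.imJ := by
  rw [re_mul, hu]; simp

theorem re_mul_eq_neg_imK (hu : u = ⟨0, 0, 0, 1⟩) : (q * u).re = -q.imK := by
  rw [re_mul, hu]; simp

end Quaternion

theorem stmt6_general {K : Type*} [Field K]
    (O : Subalgebra (𝓞 K) ℍ[K])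
    (hint : ∀ x ∈ O, IsIntegral ℤ (2 * x.re) ∧ IsIntegral ℤ (normSq x))
    (hi : (⟨0, 1, 0, 0⟩ : ℍ[K]) ∈ O) (hj : (⟨0, 0, 1, 0⟩ : ℍ[K]) ∈ O)
    (hk : (⟨0, 0, 0, 1⟩ : ℍ[K]) ∈ O) :
    ∀ q ∈ O, IsIntegral ℤ (2 * q.re) ∧ IsIntegral ℤ (2 * q.imI) ∧
      IsIntegral ℤ (2 * q.imJ) ∧ IsIntegral ℤ (2 * q.imK) := by
  intro q hq
  have hcoord {u : ℍ[K]} {x : K} (hu : u ∈ O) (hx : (q * u).re = -x) : IsIntegral ℤ (2 * x) := by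
    simpa [hx] using (hint _ (O.mul_mem hq hu)).1.neg
  exact ⟨(hint q hq).1, hcoord hi (re_mul_eq_neg_imI rfl), hcoord hj (re_mul_eq_neg_imJ rfl),
    hcoord hk (re_mul_eq_neg_imK rfl)⟩

/-- If `O` is a maximal order of `ℍ(K)` containing the standard order
`L = 𝓞 K + i 𝓞 K + j 𝓞 K + k 𝓞 K`, then `2q ∈ L` for every `q ∈ O`, i.e. all
coordinates of `2q` are algebraic integers. -/
theorem stmt6 {K : Type*} [Field K] [NumberField K]
    (O : Subalgebra (𝓞 K) ℍ[K]) (hfg : O.toSubmodule.FG)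
    (hspan : Submodule.span K (O : Set ℍ[K]) = ⊤)
    (hint : ∀ x ∈ O, IsIntegral ℤ (2 * x.re) ∧ IsIntegral ℤ (normSq x))
    (hmax : ∀ O' : Subalgebra (𝓞 K) ℍ[K], O'.toSubmodule.FG →
      (∀ x ∈ O', IsIntegral ℤ (2 * x.re) ∧ IsIntegral ℤ (normSq x)) →
      O ≤ O' → O' = O)
    (hi : (⟨0, 1, 0, 0⟩ : ℍ[K]) ∈ O) (hj : (⟨0, 0, 1, 0⟩ : ℍ[K]) ∈ O)
    (hk : (⟨0, 0, 0, 1⟩ : ℍ[K]) ∈ O) :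
    ∀ q ∈ O, IsIntegral ℤ (2 * q.re) ∧ IsIntegral ℤ (2 * q.imI) ∧
      IsIntegral ℤ (2 * q.imJ) ∧ IsIntegral ℤ (2 * q.imK) :=
  stmt6_general O hint hi hj hk
end

section
/- If L is an order in ℍ(K) and q ∈ L is L-primitive (not divisible by any non-unit of O_K), then qL ∩ K = nr(q)·O_K, and likewise Lq̄ ∩ K = nr(q)·O_K. -/
/-!
Elements of an order are integral over `𝓞 K`, so their reduced traces `x + x̄` lie in `𝓞 K`
and the order is closed under conjugation. If `a = q x` with `a ∈ K` and `x ∈ L`, then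
`x̄ = (a / nr q) q`; writing `a / nr q` as a reduced fraction `u / v` and using a Bézout
relation `s u + t v = 1` gives `q = v (s x̄ + t q)`, so primitivity makes `v` a unit.
-/

open Quaternion NumberField MulOpposite

theorem isIntegral_op_iff {R A : Type*} [CommRing R] [Ring A] [Algebra R A] {x : A} :
    IsIntegral R (op x) ↔ IsIntegral R x := by
  refine exists_congr fun p => and_congr_right fun _ => ?_
  rw [← Polynomial.aeval_def, ← Polynomial.aeval_def, Polynomial.aeval_op_apply, op_eq_zero_iff]

open scoped IsMulCommutative in
theorem IsIntegral.add_of_commute {R A : Type*} [CommRing R] [Ring A] [Algebra R A] {x y : A}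
    (h : Commute x y) (hx : IsIntegral R x) (hy : IsIntegral R y) : IsIntegral R (x + y) := by
  let S := Algebra.adjoin R {x, y}
  have : IsMulCommutative S := Algebra.isMulCommutative_adjoin R (by
    rintro a (rfl | rfl) b (rfl | rfl) <;> first | rfl | exact h.eq | exact h.eq.symm)
  have hx' : IsIntegral R (⟨x, Algebra.subset_adjoin (by simp)⟩ : S) :=
    (isIntegral_algHom_iff S.val Subtype.val_injective).mp hx
  have hy' : IsIntegral R (⟨y, Algebra.subset_adjoin (by simp)⟩ : S) :=
    (isIntegral_algHom_iff S.val Subtype.val_injective).mp hy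
  exact (hx'.add hy').map S.val

theorem exists_algebraMap_eq_of_smul_mem_of_primitive {R F V : Type*} [CommRing R] [IsDomain R]
    [IsPrincipalIdealRing R] [Field F] [Algebra R F] [IsFractionRing R F] [AddCommGroup V]
    [Module F V] [Module R V] [IsScalarTower R F V] {L : Submodule R V} {q : V} (hq : q ∈ L)
    (hprim : ∀ (α : R) (r : V), r ∈ L → q = α • r → IsUnit α) {c : F} (hc : c • q ∈ L) :
    ∃ c' : R, algebraMap R F c' = c := by
  obtain ⟨a, b, hab, rfl⟩ := IsFractionRing.exists_reduced_fraction R c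
  obtain ⟨s, t, hst⟩ := hab.isCoprime
  have hb : (b : R) • (IsLocalization.mk' F a b • q) = a • q := by
    rw [← algebraMap_smul F, smul_smul, mul_comm, IsLocalization.mk'_spec, algebraMap_smul]
  have hq' : q = (b : R) • (s • (IsLocalization.mk' F a b • q) + t • q) := by
    rw [smul_add, smul_comm (b : R) s, hb, smul_smul, smul_smul, ← add_smul, mul_comm (b : R) t,
      hst, one_smul]
  obtain ⟨u, hu⟩ := hprim b _ (L.add_mem (L.smul_mem s hc) (L.smul_mem t hq)) hq'
  refine ⟨a * ↑u⁻¹, ?_⟩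
  rw [eq_comm, IsLocalization.mk'_eq_iff_eq_mul, ← hu, ← map_mul, mul_assoc, Units.inv_mul,
    mul_one]

namespace Quaternion

variable {R K : Type*} [CommRing R] [Field K] [Algebra R K]

theorem isIntegral_star {x : ℍ[K]} (hx : IsIntegral R x) : IsIntegral R (star x) :=
  isIntegral_op_iff.mp (hx.map ((starAe : ℍ[K] ≃ₐ[K] _).toAlgHom.restrictScalars R))

theorem isIntegral_two_mul_re {x : ℍ[K]} (hx : IsIntegral R x) : IsIntegral R (2 * x.re) := by
  have h := IsIntegral.add_of_commute star_comm_self.symm hx (isIntegral_star hx)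
  rw [self_add_star'] at h
  exact (isIntegral_algebraMap_iff coe_injective).mp h

theorem star_mem_of_isIntegral [IsDomain R] [IsIntegrallyClosed R] [IsFractionRing R K]
    (L : Subalgebra R ℍ[K]) (hL : ∀ x ∈ L, IsIntegral R x) {x : ℍ[K]} (hx : x ∈ L) :
    star x ∈ L := by
  obtain ⟨t, ht⟩ := IsIntegrallyClosed.isIntegral_iff.mp (isIntegral_two_mul_re (hL x hx))
  have hstar : star x = algebraMap R ℍ[K] t - x := by
    rw [IsScalarTower.algebraMap_apply R K, ht, eq_sub_iff_add_eq, add_comm, self_add_star']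
    rfl
  rw [hstar]
  exact sub_mem (L.algebraMap_mem t) hx

theorem normSq_smul_star_eq {a : K} {q x : ℍ[K]} (h : (a : ℍ[K]) = q * x) :
    normSq q • star x = a • q := by
  have h' : (a : ℍ[K]) = star x * star q := by rw [← star_coe, h, star_mul]
  rw [← mul_coe_eq_smul, ← coe_mul_eq_smul, ← star_mul_self, ← mul_assoc, h']

theorem coe_normSq_mul_eq_mul_smul_star (q : ℍ[K]) (c : K) :
    ((normSq q * c : K) : ℍ[K]) = q * (c • star q) := by
  rw [mul_smul_comm, self_mul_star, ← coe_mul_eq_smul, coe_mul, coe_commutes]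

theorem exists_eq_normSq_mul_of_coe_eq_mul [IsDomain R] [IsPrincipalIdealRing R]
    [IsFractionRing R K] {L : Submodule R ℍ[K]} {q x : ℍ[K]} (hq : q ∈ L)
    (hprim : ∀ (α : R) (r : ℍ[K]), r ∈ L → q = α • r → IsUnit α) (hx : star x ∈ L) {a : K}
    (h : (a : ℍ[K]) = q * x) : ∃ c : R, a = normSq q * algebraMap R K c := by
  have hnx := normSq_smul_star_eq h
  by_cases hn : normSq q = 0
  · have ha : a = 0 := by
      rw [hn, zero_smul, eq_comm, smul_eq_zero] at hnx
      rcases hnx with ha | rfl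
      · exact ha
      · simpa using congrArg QuaternionAlgebra.re h
    exact ⟨0, by simp [ha]⟩
  have hx' : star x = (a / normSq q) • q := by
    rw [div_eq_inv_mul, mul_smul, ← hnx, inv_smul_smul₀ hn]
  obtain ⟨c, hc⟩ := exists_algebraMap_eq_of_smul_mem_of_primitive hq hprim (hx' ▸ hx)
  exact ⟨c, by rw [hc, mul_div_cancel₀ _ hn]⟩

theorem exists_mem_coe_eq_mul_star_iff {S : Set ℍ[K]} (hS : ∀ x ∈ S, star x ∈ S) (q : ℍ[K])
    (a : K) : (∃ x ∈ S, (a : ℍ[K]) = x * star q) ↔ ∃ x ∈ S, (a : ℍ[K]) = q * x := by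
  have key : ∀ x y : ℍ[K], (a : ℍ[K]) = x * y ↔ (a : ℍ[K]) = star y * star x := fun x y => by
    rw [← star_mul, ← star_coe, star_inj, star_coe]
  constructor
  · rintro ⟨x, hx, h⟩
    exact ⟨star x, hS x hx, by rwa [key, star_star] at h⟩
  · rintro ⟨x, hx, h⟩
    exact ⟨star x, hS x hx, by rwa [key] at h⟩

end Quaternion

theorem stmt9_general {K : Type*} [Field K] [NumberField K]
    (h1 : IsPrincipalIdealRing (𝓞 K))
    (L : Subalgebra (𝓞 K) ℍ[K]) (hfg : L.toSubmodule.FG)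
    (q : ℍ[K]) (hqL : q ∈ L)
    (hprim : ∀ (α : 𝓞 K) (r : ℍ[K]), r ∈ L →
      q = algebraMap (𝓞 K) ℍ[K] α * r → IsUnit α) :
    (∀ a : K, (∃ x ∈ L, (a : ℍ[K]) = q * x) ↔
      ∃ c : 𝓞 K, a = normSq q * algebraMap (𝓞 K) K c) ∧
    (∀ a : K, (∃ x ∈ L, (a : ℍ[K]) = x * star q) ↔
      ∃ c : 𝓞 K, a = normSq q * algebraMap (𝓞 K) K c) := by
  have : Module.Finite (𝓞 K) L := Module.Finite.iff_fg.mpr hfg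
  have hstar : ∀ x ∈ L, star x ∈ L :=
    fun x hx => star_mem_of_isIntegral L ((Subalgebra.isIntegral_iff L).mp inferInstance) hx
  have hprim' : ∀ (α : 𝓞 K) (r : ℍ[K]), r ∈ L.toSubmodule → q = α • r → IsUnit α :=
    fun α r hr h => hprim α r hr (by rwa [← Algebra.smul_def])
  have hleft : ∀ a : K, (∃ x ∈ L, (a : ℍ[K]) = q * x) ↔
      ∃ c : 𝓞 K, a = normSq q * algebraMap (𝓞 K) K c := by
    refine fun a => ⟨fun ⟨x, hx, h⟩ => ?_, fun ⟨c, hc⟩ => ?_⟩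
    · exact exists_eq_normSq_mul_of_coe_eq_mul (R := 𝓞 K) hqL hprim' (hstar x hx) h
    · refine ⟨c • star q, L.smul_mem (hstar q hqL) c, ?_⟩
      rw [hc, coe_normSq_mul_eq_mul_smul_star, algebraMap_smul]
  exact ⟨hleft, fun a => (exists_mem_coe_eq_mul_star_iff hstar q a).trans (hleft a)⟩

/-- If `L` is an order in `ℍ(K)` (with `𝓞 K` a PID) and `q ∈ L` is `L`-primitive
(not divisible by any non-unit of `𝓞 K`), then `qL ∩ K = nr(q)·𝓞 K`, and likewise
`L q̄ ∩ K = nr(q)·𝓞 K`. -/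
theorem stmt9 {K : Type*} [Field K] [NumberField K]
    (h1 : IsPrincipalIdealRing (𝓞 K))
    (L : Subalgebra (𝓞 K) ℍ[K]) (hfg : L.toSubmodule.FG)
    (hspan : Submodule.span K (L : Set ℍ[K]) = ⊤)
    (q : ℍ[K]) (hqL : q ∈ L)
    (hprim : ∀ (α : 𝓞 K) (r : ℍ[K]), r ∈ L →
      q = algebraMap (𝓞 K) ℍ[K] α * r → IsUnit α) :
    (∀ a : K, (∃ x ∈ L, (a : ℍ[K]) = q * x) ↔
      ∃ c : 𝓞 K, a = normSq q * algebraMap (𝓞 K) K c) ∧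
    (∀ a : K, (∃ x ∈ L, (a : ℍ[K]) = x * star q) ↔
      ∃ c : 𝓞 K, a = normSq q * algebraMap (𝓞 K) K c) :=
  stmt9_general h1 L hfg q hqL hprim
end

section
/- If J ⊆ I are full O_K-lattices (ideals) in ℍ(K), then the K-index [I : J]_K factors as [I ∩ K : J ∩ K]_K · [Im(I) : Im(J)]_K, where Im denotes the image under the projection x ↦ (x - x̄)/2 onto the pure quaternions; all indices are (principal) ideals of O_K. -/
open Quaternion NumberField

/-- The projection `x ↦ (x - x̄)/2` of a quaternion onto its pure (imaginary) part,
written in coordinates as a `K`-linear map `ℍ(K) → K³`. -/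
noncomputable def imVec (K : Type*) [Field K] : ℍ[K] →ₗ[K] (Fin 3 → K) where
  toFun x := ![x.imI, x.imJ, x.imK]
  map_add' x y := by funext i; fin_cases i <;> simp
  map_smul' a x := by funext i; fin_cases i <;> simp

/-!
Fix a reference `K`-basis `s` of each space. For a full `R`-lattice `L` and a `K`-basis `c`
spanning `L` over `R`, the ideal `(det_s c)` depends only on `L`, since the transition matrix
between two such bases lies in `GL_n(R)`; and a linear map carrying `M` onto `N` multiplies
`(det_s M)` by its determinant. Because `I ∩ K` is the kernel of `Im` on `I`, the lattice `I` has
a basis `(a, e₁, e₂, e₃)` with `a` generating `I ∩ K` and `Im eᵢ` a basis of `Im I`; in the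
basis `1, i, j, k` its matrix is block triangular, so `det I = a · det (Im I)`. Doing the same
for `J` and cancelling the nonzero factor `det I` gives the factorisation.
-/

open Module Submodule

theorem Submodule.eq_sup_inf_ker_of_map_eq {R V W : Type*} [Ring R] [AddCommGroup V] [Module R V]
    [AddCommGroup W] [Module R W] {f : V →ₗ[R] W} {M N : Submodule R V} (hNM : N ≤ M)
    (hmap : map f M = map f N) : M = N ⊔ M ⊓ LinearMap.ker f := by
  refine le_antisymm ?_ (sup_le hNM inf_le_left)
  calc M ≤ (N ⊔ LinearMap.ker f) ⊓ M :=
        le_inf ((LinearMap.map_le_map_iff f).mp hmap.le) le_rfl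
    _ = N ⊔ M ⊓ LinearMap.ker f := by rw [sup_inf_assoc_of_le _ hNM, inf_comm]

theorem Submodule.span_singleton_mul_span_singleton {R A : Type*} [CommSemiring R] [Semiring A]
    [Algebra R A] (x y : A) : (R ∙ x) * (R ∙ y) = R ∙ (x * y) := by
  rw [span_mul_span, Set.singleton_mul_singleton]

section Lattice

variable {R K V W : Type*} [CommRing R] [Field K] [Algebra R K]
  [AddCommGroup V] [Module K V] [Module R V] [IsScalarTower R K V]
  [AddCommGroup W] [Module K W] [Module R W] [IsScalarTower R K W]

theorem Submodule.IsLattice.map_of_surjective (M : Submodule R V) [IsLattice K M]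
    {f : V →ₗ[K] W} (hf : Function.Surjective f) :
    IsLattice K (map (f.restrictScalars R) M) where
  fg := IsLattice.fg.map _
  span_eq_top := by
    rw [map_coe, LinearMap.coe_restrictScalars, span_image, IsLattice.span_eq_top, map_top,
      LinearMap.range_eq_top.mpr hf]

theorem Submodule.IsLattice.comap_of_injective [IsDomain R] [IsFractionRing R K]
    [IsNoetherianRing R] (M : Submodule R V) [IsLattice K M] {f : W →ₗ[K] V}
    (hf : Function.Injective f) :
    IsLattice K (comap (f.restrictScalars R) M) where
  fg := by
    have : IsNoetherian R M := isNoetherian_of_fg_of_noetherian M IsLattice.fg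
    refine fg_of_fg_map_injective (f.restrictScalars R) hf ?_
    rw [← inf_eq_right.mpr (map_comap_le (f.restrictScalars R) M), ← map_comap_subtype]
    exact (IsNoetherian.noetherian _).map _
  span_eq_top := by
    refine eq_top_iff.mpr fun w _ ↦ ?_
    have hfw : f w ∈ span K (M : Set V) := (IsLattice.span_eq_top (M := M)) ▸ trivial
    obtain ⟨⟨t, ht⟩, htw⟩ :=
      multiple_mem_span_of_mem_localization_span (nonZeroDivisors R) K _ _ hfw
    rw [span_eq, Submonoid.mk_smul, ← LinearMap.coe_restrictScalars R f, ← map_smul] at htw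
    have ht0 : algebraMap R K t ≠ 0 :=
      (map_ne_zero_iff _ (IsFractionRing.injective R K)).mpr (nonZeroDivisors.ne_zero ht)
    have hw : w = (algebraMap R K t)⁻¹ • t • w := by
      rw [← algebraMap_smul K t w, smul_smul, inv_mul_cancel₀ ht0, one_smul]
    rw [hw]
    exact smul_mem _ _ (subset_span htw)

theorem Submodule.IsLattice.exists_basis_span_eq [IsDomain R] [IsFractionRing R K]
    [IsPrincipalIdealRing R] {ι : Type*} (s : Basis ι K V) (M : Submodule R V) [IsLattice K M] :
    ∃ c : Basis ι K V, span R (Set.range c) = M := by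
  let b := (Free.chooseBasis R M).extendOfIsLattice K
  refine ⟨b.reindex (b.indexEquiv s), ?_⟩
  have hb : ⇑b = M.subtype ∘ Free.chooseBasis R M := funext (Basis.extendOfIsLattice_apply K _)
  rw [Basis.range_reindex, hb, Set.range_comp, ← map_span, Basis.span_eq, map_top, range_subtype]

variable [IsDomain R] [Module.IsTorsionFree R K] {ι : Type*} [Fintype ι] [DecidableEq ι]

theorem Module.Basis.det_mem_range_algebraMap (c : Basis ι K V) {v : ι → V}
    (hv : ∀ j, v j ∈ span R (Set.range c)) : c.det v ∈ (algebraMap R K).range := by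
  let A : Matrix ι ι R := fun i j ↦ (c.restrictScalars R).repr ⟨v j, hv j⟩ i
  have hA : c.toMatrix v = A.map (algebraMap R K) := by
    ext i j
    exact (c.restrictScalars_repr_apply R ⟨v j, hv j⟩ i).symm
  exact ⟨A.det, by rw [c.det_apply, hA, RingHom.map_det]; rfl⟩

theorem Module.Basis.span_singleton_det_eq_of_span_eq (s c : Basis ι K V) {v : ι → V}
    (h : span R (Set.range v) = span R (Set.range c)) :
    R ∙ s.det v = R ∙ s.det c := by
  have hvK : ⊤ ≤ span K (Set.range v) := by
    rw [← span_span_of_tower R K, h, span_span_of_tower, c.span_eq]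
  let b := basisOfTopLeSpanOfCardEqFinrank v hvK (finrank_eq_card_basis c).symm
  have hb : ⇑b = v := coe_basisOfTopLeSpanOfCardEqFinrank v _ _
  obtain ⟨x, hx⟩ := c.det_mem_range_algebraMap (R := R) (v := b)
    fun j ↦ h ▸ subset_span ⟨j, hb ▸ rfl⟩
  obtain ⟨y, hy⟩ := b.det_mem_range_algebraMap (R := R) (v := c)
    fun j ↦ hb ▸ h.symm ▸ subset_span ⟨j, rfl⟩
  have hxy : x * y = 1 := FaithfulSMul.algebraMap_injective R K <| by
    rw [map_mul, hx, hy, Basis.det_mul_det, Basis.det_self, map_one]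
  rw [← hb, ← s.det_mul_det c b, ← hx, mul_comm, ← Algebra.smul_def]
  exact span_singleton_smul_eq (.of_mul_eq_one y hxy) _

theorem Module.Basis.span_singleton_det_mul_det_eq (s cM cN : Basis ι K V) (α : V →ₗ[K] V)
    (hα : map (α.restrictScalars R) (span R (Set.range cM)) = span R (Set.range cN)) :
    R ∙ (LinearMap.det α * s.det cM) = R ∙ s.det cN := by
  rw [← Basis.det_comp]
  refine s.span_singleton_det_eq_of_span_eq cN ?_
  rw [← hα, map_span, Set.range_comp]
  rfl

theorem Submodule.span_singleton_eq_of_mul_right {x y c : K} (hc : c ≠ 0)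
    (h : R ∙ (x * c) = R ∙ (y * c)) : R ∙ x = R ∙ y := by
  obtain ⟨u, hu⟩ := span_singleton_eq_span_singleton.mp h
  rw [← smul_mul_assoc] at hu
  exact span_singleton_eq_span_singleton.mpr ⟨u, mul_right_cancel₀ hc hu⟩

end Lattice

theorem Module.Basis.singleton_det_apply {R ι : Type*} [CommRing R] [Unique ι] [DecidableEq ι]
    (v : ι → R) : (Basis.singleton ι R).det v = v default := by
  simp [Basis.det_apply, Basis.toMatrix_apply]

section Quaternion

noncomputable def Quaternion.basisOneIJK (R : Type*) [CommRing R] : Basis (Fin 4) R ℍ[R] :=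
  QuaternionAlgebra.basisOneIJK (-1) 0 (-1)

variable {K : Type*} [Field K]

theorem imVec_surjective : Function.Surjective (imVec K) :=
  fun y ↦ ⟨⟨0, y 0, y 1, y 2⟩, by funext i; fin_cases i <;> rfl⟩

theorem ker_imVec : LinearMap.ker (imVec K) = LinearMap.range (Algebra.linearMap K ℍ[K]) := by
  ext x
  refine ⟨fun h ↦ ⟨x.re, ?_⟩, ?_⟩
  · exact QuaternionAlgebra.ext rfl (congrFun h 0).symm (congrFun h 1).symm (congrFun h 2).symm
  · rintro ⟨a, rfl⟩
    funext i
    fin_cases i <;> rfl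

theorem Quaternion.basisOneIJK_det_vecCons (a : K) (e : Fin 3 → ℍ[K]) :
    (basisOneIJK K).det (Matrix.vecCons (algebraMap K ℍ[K] a) e)
      = a * (Pi.basisFun K (Fin 3)).det (imVec K ∘ e) := by
  rw [Basis.det_apply, Basis.det_apply]
  set A := (basisOneIJK K).toMatrix (Matrix.vecCons (algebraMap K ℍ[K] a) e)
  have hcol : ∀ i, A i 0 = ![a, 0, 0, 0] i := fun i ↦ by fin_cases i <;> rfl
  have hsub : A.submatrix Fin.succ Fin.succ = (Pi.basisFun K (Fin 3)).toMatrix (imVec K ∘ e) := by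
    ext i j
    fin_cases i <;> rfl
  rw [Matrix.det_succ_column_zero, Fin.sum_univ_succ, Fin.succAbove_zero, hsub]
  simp [hcol, Fin.sum_univ_succ]

variable {R : Type*} [CommRing R] [Algebra R K]

theorem span_vecCons_eq_of_span_eq (M : Submodule R ℍ[K]) {a : K}
    (ha : R ∙ a = comap ((Algebra.linearMap K ℍ[K]).restrictScalars R) M)
    {e : Fin 3 → ℍ[K]} (heM : ∀ i, e i ∈ M)
    (he : span R (Set.range (imVec K ∘ e)) = map ((imVec K).restrictScalars R) M) :
    span R (Set.range (Matrix.vecCons (algebraMap K ℍ[K] a) e)) = M := by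
  set ℓ := (Algebra.linearMap K ℍ[K]).restrictScalars R
  set f := (imVec K).restrictScalars R
  have hle : span R (Set.range e) ≤ M := span_le.mpr (Set.range_subset_iff.mpr heM)
  have hmap : map f M = map f (span R (Set.range e)) := by
    rw [map_span, ← Set.range_comp, ← he]; rfl
  have hker : M ⊓ LinearMap.ker f = R ∙ algebraMap K ℍ[K] a := by
    have : LinearMap.ker f = LinearMap.range ℓ := by
      ext x; exact SetLike.ext_iff.mp ker_imVec x
    rw [this, inf_comm, ← map_comap_eq, ← ha, map_span, Set.image_singleton]
    rfl
  rw [Matrix.range_cons, span_union, sup_comm, ← hker]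
  exact (eq_sup_inf_ker_of_map_eq hle hmap).symm

-- `c` is `(a, e₁, e₂, e₃)` with `a = cp 0` and `imVec K eᵢ = v i`.
theorem exists_adapted_basis [IsDomain R] [IsFractionRing R K] [IsPrincipalIdealRing R]
    (M : Submodule R ℍ[K]) [IsLattice K M] :
    ∃ (c : Basis (Fin 4) K ℍ[K]) (cp : Basis (Fin 1) K K) (v : Basis (Fin 3) K (Fin 3 → K)),
      span R (Set.range c) = M ∧
      span R (Set.range cp) = comap ((Algebra.linearMap K ℍ[K]).restrictScalars R) M ∧
      span R (Set.range v) = map ((imVec K).restrictScalars R) M ∧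
      (basisOneIJK K).det c
        = (Basis.singleton (Fin 1) K).det cp * (Pi.basisFun K (Fin 3)).det v := by
  have := IsLattice.comap_of_injective M (f := Algebra.linearMap K ℍ[K])
    (algebraMap K ℍ[K]).injective
  have := IsLattice.map_of_surjective M (imVec_surjective (K := K))
  obtain ⟨cp, hcp⟩ := IsLattice.exists_basis_span_eq (Basis.singleton (Fin 1) K)
    (comap ((Algebra.linearMap K ℍ[K]).restrictScalars R) M)
  obtain ⟨v, hv⟩ := IsLattice.exists_basis_span_eq (Pi.basisFun K (Fin 3))
    (map ((imVec K).restrictScalars R) M)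
  have hlift (i : Fin 3) : v i ∈ map ((imVec K).restrictScalars R) M :=
    hv ▸ subset_span ⟨i, rfl⟩
  choose e heM he using hlift
  have hev : imVec K ∘ e = v := funext he
  have hdet := Quaternion.basisOneIJK_det_vecCons (cp 0) e
  rw [hev] at hdet
  obtain ⟨hli, hsp⟩ := (basisOneIJK K).is_basis_iff_det.mpr <|
    hdet ▸ (mul_ne_zero (cp.ne_zero 0) ((Pi.basisFun K (Fin 3)).isUnit_det v).ne_zero).isUnit
  refine ⟨Basis.mk hli hsp.ge, cp, v, ?_, hcp, hv, ?_⟩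
  · rw [Basis.coe_mk]
    refine span_vecCons_eq_of_span_eq M ?_ heM (hev ▸ hv)
    rw [← hcp, Set.range_unique]
    rfl
  · rw [Basis.coe_mk, hdet]
    exact congrArg (· * _) (Basis.singleton_det_apply _).symm

end Quaternion

theorem stmt10_general {K : Type*} [Field K] [NumberField K]
    (h1 : IsPrincipalIdealRing (𝓞 K))
    (I J : Submodule (𝓞 K) ℍ[K]) (hIfg : I.FG) (hJfg : J.FG)
    (hIspan : Submodule.span K (I : Set ℍ[K]) = ⊤)
    (hJspan : Submodule.span K (J : Set ℍ[K]) = ⊤)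
    (φ : ℍ[K] →ₗ[K] ℍ[K])
    (hφ : Submodule.map (φ.restrictScalars (𝓞 K)) I = J)
    (ψ : K →ₗ[K] K)
    (hψ : Submodule.map (ψ.restrictScalars (𝓞 K))
        (Submodule.comap ((Algebra.linearMap K ℍ[K]).restrictScalars (𝓞 K)) I)
      = Submodule.comap ((Algebra.linearMap K ℍ[K]).restrictScalars (𝓞 K)) J)
    (χ : (Fin 3 → K) →ₗ[K] (Fin 3 → K))
    (hχ : Submodule.map (χ.restrictScalars (𝓞 K))
        (Submodule.map ((imVec K).restrictScalars (𝓞 K)) I)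
      = Submodule.map ((imVec K).restrictScalars (𝓞 K)) J) :
    Submodule.span (𝓞 K) {LinearMap.det φ}
      = Submodule.span (𝓞 K) {LinearMap.det ψ * LinearMap.det χ} := by
  have := h1
  have : IsLattice K I := ⟨hIfg, hIspan⟩
  have : IsLattice K J := ⟨hJfg, hJspan⟩
  obtain ⟨cI, cpI, vI, hcI, hcpI, hvI, hdetI⟩ := exists_adapted_basis I
  obtain ⟨cJ, cpJ, vJ, hcJ, hcpJ, hvJ, hdetJ⟩ := exists_adapted_basis J
  have hφdet := (Quaternion.basisOneIJK K).span_singleton_det_mul_det_eq cI cJ φ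
    (by rwa [hcI, hcJ])
  have hψdet := (Basis.singleton (Fin 1) K).span_singleton_det_mul_det_eq cpI cpJ ψ
    (by rwa [hcpI, hcpJ])
  have hχdet := (Pi.basisFun K (Fin 3)).span_singleton_det_mul_det_eq vI vJ χ (by rwa [hvI, hvJ])
  rw [hdetI, hdetJ] at hφdet
  refine span_singleton_eq_of_mul_right
    (mul_ne_zero ((Basis.singleton (Fin 1) K).isUnit_det cpI).ne_zero
      ((Pi.basisFun K (Fin 3)).isUnit_det vI).ne_zero) ?_
  rw [hφdet, ← span_singleton_mul_span_singleton, ← hψdet, ← hχdet,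
    span_singleton_mul_span_singleton, mul_mul_mul_comm]

/-- If `J ⊆ I` are full `𝓞 K`-lattices (ideals) in `ℍ(K)`, then the `K`-index
`[I : J]_K` factors as `[I ∩ K : J ∩ K]_K · [Im(I) : Im(J)]_K`: if `φ`, `ψ`, `χ` are
injective `K`-linear maps carrying `I` onto `J`, `I ∩ K` onto `J ∩ K`, and `Im(I)`
onto `Im(J)` respectively, then the principal ideals of `𝓞 K` generated by `det φ`
and by `det ψ · det χ` coincide. -/
theorem stmt10 {K : Type*} [Field K] [NumberField K]
    (h1 : IsPrincipalIdealRing (𝓞 K))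
    (I J : Submodule (𝓞 K) ℍ[K]) (hJI : J ≤ I) (hIfg : I.FG) (hJfg : J.FG)
    (hIspan : Submodule.span K (I : Set ℍ[K]) = ⊤)
    (hJspan : Submodule.span K (J : Set ℍ[K]) = ⊤)
    (φ : ℍ[K] →ₗ[K] ℍ[K]) (hφinj : Function.Injective φ)
    (hφ : Submodule.map (φ.restrictScalars (𝓞 K)) I = J)
    (ψ : K →ₗ[K] K) (hψinj : Function.Injective ψ)
    (hψ : Submodule.map (ψ.restrictScalars (𝓞 K))
        (Submodule.comap ((Algebra.linearMap K ℍ[K]).restrictScalars (𝓞 K)) I)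
      = Submodule.comap ((Algebra.linearMap K ℍ[K]).restrictScalars (𝓞 K)) J)
    (χ : (Fin 3 → K) →ₗ[K] (Fin 3 → K)) (hχinj : Function.Injective χ)
    (hχ : Submodule.map (χ.restrictScalars (𝓞 K))
        (Submodule.map ((imVec K).restrictScalars (𝓞 K)) I)
      = Submodule.map ((imVec K).restrictScalars (𝓞 K)) J) :
    Submodule.span (𝓞 K) {LinearMap.det φ}
      = Submodule.span (𝓞 K) {LinearMap.det ψ * LinearMap.det χ} :=
  stmt10_general h1 I J hIfg hJfg hIspan hJspan φ hφ ψ hψ χ hχ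
end

section
/- If L' ⊆ L are orders in ℍ(K), then [L : L'] = [Im(L) : Im(L')], i.e., the index of L' in L equals the index of the projected module Im(L') in Im(L). -/
open Quaternion NumberField

/-!
`Im` is `𝓞 K`-linear with kernel `K`. Elements of an order are integral over `𝓞 K`, so an order
meets `K` exactly in `𝓞 K`, which is contained in every order. Hence `Im` is injective on `L`
modulo `L'`, and `x ↦ Im x` induces an isomorphism `L / L' ≅ Im L / Im L'`.
-/

namespace Submodule

variable {R M N : Type*} [Ring R] [AddCommGroup M] [AddCommGroup N] [Module R M] [Module R N]

theorem card_quotient_eq_card_map_quotient (f : M →ₗ[R] N) {A A' : Submodule R M}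
    (hle : A' ≤ A) (hker : LinearMap.ker f ⊓ A ≤ A') :
    Nat.card (A ⧸ A'.comap A.subtype)
      = Nat.card (A.map f ⧸ (A'.map f).comap (A.map f).subtype) := by
  set B := (A'.map f).comap (A.map f).subtype
  let φ : A →ₗ[R] A.map f ⧸ B := B.mkQ ∘ₗ f.submoduleMap A
  have hφ : Function.Surjective φ := B.mkQ_surjective.comp (f.submoduleMap_surjective A)
  have hker_φ : LinearMap.ker φ = A'.comap A.subtype := by
    ext x
    simp only [φ, B, LinearMap.mem_ker, LinearMap.comp_apply, mkQ_apply, Quotient.mk_eq_zero,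
      mem_comap, subtype_apply, LinearMap.submoduleMap_coe_apply, mem_map]
    constructor
    · rintro ⟨y, hy, hxy⟩
      have hdiff : (x : M) - y ∈ LinearMap.ker f ⊓ A :=
        ⟨by simp [hxy], sub_mem x.2 (hle hy)⟩
      simpa using add_mem (hker hdiff) hy
    · exact fun hx => ⟨x, hx, rfl⟩
  exact Nat.card_congr
    ((quotEquivOfEq _ _ hker_φ.symm).trans (φ.quotKerEquivOfSurjective hφ)).toEquiv

end Submodule

theorem Subalgebra.exists_algebraMap_eq_of_algebraMap_mem {R K A : Type*} [CommRing R] [Field K]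
    [Ring A] [Nontrivial A] [Algebra R K] [IsFractionRing R K] [IsIntegrallyClosed R]
    [Algebra K A] [Algebra R A] [IsScalarTower R K A]
    (L : Subalgebra R A) (hL : L.toSubmodule.FG) {c : K} (hc : algebraMap K A c ∈ L) :
    ∃ r, algebraMap R K r = c :=
  IsIntegrallyClosed.isIntegral_iff.mp <|
    (isIntegral_algebraMap_iff (algebraMap K A).injective).mp (IsIntegral.of_mem_of_fg L hL _ hc)

theorem imVec_eq_zero_iff {K : Type*} [Field K] {x : ℍ[K]} :
    imVec K x = 0 ↔ x = algebraMap K ℍ[K] x.re := by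
  constructor
  · intro h
    have hI : x.imI = 0 := congrFun h 0
    have hJ : x.imJ = 0 := congrFun h 1
    have hK : x.imK = 0 := congrFun h 2
    ext <;> simp [hI, hJ, hK]
  · intro h
    rw [h]
    funext i
    fin_cases i <;> simp [imVec]

theorem ker_imVec_inf_le {K : Type*} [Field K] [NumberField K] {L : Subalgebra (𝓞 K) ℍ[K]}
    (hfg : L.toSubmodule.FG) (L' : Subalgebra (𝓞 K) ℍ[K]) :
    LinearMap.ker ((imVec K).restrictScalars (𝓞 K)) ⊓ L.toSubmodule ≤ L'.toSubmodule := by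
  rintro x ⟨hx0, hxL⟩
  have hx : x = algebraMap K ℍ[K] x.re := imVec_eq_zero_iff.mp hx0
  obtain ⟨r, hr⟩ := L.exists_algebraMap_eq_of_algebraMap_mem hfg (hx ▸ hxL)
  rw [hx, ← hr, ← IsScalarTower.algebraMap_apply]
  exact L'.algebraMap_mem r

theorem stmt11_general {K : Type*} [Field K] [NumberField K]
    (L L' : Subalgebra (𝓞 K) ℍ[K]) (hle : L' ≤ L)
    (hfg : L.toSubmodule.FG) :
    Nat.card (L.toSubmodule ⧸
        Submodule.comap L.toSubmodule.subtype L'.toSubmodule)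
      = Nat.card ((Submodule.map ((imVec K).restrictScalars (𝓞 K)) L.toSubmodule) ⧸
          Submodule.comap
            (Submodule.map ((imVec K).restrictScalars (𝓞 K)) L.toSubmodule).subtype
            (Submodule.map ((imVec K).restrictScalars (𝓞 K)) L'.toSubmodule)) :=
  Submodule.card_quotient_eq_card_map_quotient _ hle (ker_imVec_inf_le hfg L')

/-- If `L' ⊆ L` are orders in `ℍ(K)`, then `[L : L'] = [Im(L) : Im(L')]`:
the index of `L'` in `L` equals the index of the projected module `Im(L')`
in `Im(L)`. -/
theorem stmt11 {K : Type*} [Field K] [NumberField K]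
    (L L' : Subalgebra (𝓞 K) ℍ[K]) (hle : L' ≤ L)
    (hfg : L.toSubmodule.FG) (hfg' : L'.toSubmodule.FG)
    (hspan : Submodule.span K (L : Set ℍ[K]) = ⊤)
    (hspan' : Submodule.span K (L' : Set ℍ[K]) = ⊤) :
    Nat.card (L.toSubmodule ⧸
        Submodule.comap L.toSubmodule.subtype L'.toSubmodule)
      = Nat.card ((Submodule.map ((imVec K).restrictScalars (𝓞 K)) L.toSubmodule) ⧸
          Submodule.comap
            (Submodule.map ((imVec K).restrictScalars (𝓞 K)) L.toSubmodule).subtype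
            (Submodule.map ((imVec K).restrictScalars (𝓞 K)) L'.toSubmodule)) :=
  stmt11_general L L' hle hfg
end

section
/- For an order L in ℍ(K) and any nonzero q ∈ L, the intersection of the pure parts equals the pure part of the intersection: Im(L) ∩ Im(q L q⁻¹) = Im(L ∩ q L q⁻¹). -/
open Quaternion NumberField

instance instIsScalarTowerRingOfIntegersQuaternion (K : Type*) [Field K] [NumberField K] :
    IsScalarTower (𝓞 K) ℍ[K] ℍ[K] := IsScalarTower.right

instance instSMulCommClassRingOfIntegersQuaternion (K : Type*) [Field K] [NumberField K] :
    SMulCommClass (𝓞 K) ℍ[K] ℍ[K] := Algebra.to_smulCommClass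

open scoped IsMulCommutative in
theorem IsIntegral.sub_of_commute {R A : Type*} [CommRing R] [Ring A] [Algebra R A]
    {x y : A} (h : Commute x y) (hx : IsIntegral R x) (hy : IsIntegral R y) :
    IsIntegral R (x - y) := by
  let S := Algebra.adjoin R ({x, y} : Set A)
  have : IsMulCommutative S := Algebra.isMulCommutative_adjoin R (by
    rintro a (rfl | rfl) b (rfl | rfl) <;> first | rfl | exact h | exact h.symm)
  have hxS : x ∈ S := Algebra.subset_adjoin (by simp)
  have hyS : y ∈ S := Algebra.subset_adjoin (by simp)
  have hx' : IsIntegral R (⟨x, hxS⟩ : S) :=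
    (isIntegral_algHom_iff S.val Subtype.val_injective).mp hx
  have hy' : IsIntegral R (⟨y, hyS⟩ : S) :=
    (isIntegral_algHom_iff S.val Subtype.val_injective).mp hy
  simpa using (isIntegral_algHom_iff S.val Subtype.val_injective).mpr (hx'.sub hy')

theorem Subalgebra.add_algebraMap_mem_of_isIntegral {R K A : Type*} [CommRing R] [IsDomain R]
    [IsIntegrallyClosed R] [Field K] [Algebra R K] [IsFractionRing R K] [Ring A] [Nontrivial A]
    [Algebra K A] [Algebra R A] [IsScalarTower R K A] {S : Subalgebra R A} {y : A} (hy : y ∈ S)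
    (hy_int : IsIntegral R y) {r : K} (h_int : IsIntegral R (y + algebraMap K A r)) :
    y + algebraMap K A r ∈ S := by
  have hr : IsIntegral R r := by
    have hcomm : Commute (y + algebraMap K A r) y :=
      (Commute.refl y).add_left (Algebra.commutes r y)
    refine (isIntegral_algebraMap_iff (algebraMap K A).injective).mp ?_
    simpa using h_int.sub_of_commute hcomm hy_int
  obtain ⟨s, rfl⟩ := IsIntegrallyClosed.isIntegral_iff.mp hr
  rw [← IsScalarTower.algebraMap_apply]
  exact add_mem hy (S.algebraMap_mem s)

def Units.innerAlgHom (R : Type*) {A : Type*} [CommSemiring R] [Semiring A] [Algebra R A]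
    (u : Aˣ) : A →ₐ[R] A where
  toFun x := u * x * ↑u⁻¹
  map_one' := by simp only [mul_one, Units.mul_inv]
  map_mul' x y := by simp only [mul_assoc, Units.inv_mul_cancel_left]
  map_zero' := by simp only [mul_zero, zero_mul]
  map_add' x y := by simp only [mul_add, add_mul]
  commutes' r := by rw [← Algebra.commutes, Units.mul_inv_cancel_right]

theorem Quaternion.eq_add_algebraMap_of_imVec_eq {K : Type*} [Field K] {x y : ℍ[K]}
    (h : imVec K x = imVec K y) : x = y + algebraMap K ℍ[K] (x.re - y.re) := by
  have hI : x.imI = y.imI := congr_fun h 0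
  have hJ : x.imJ = y.imJ := congr_fun h 1
  have hK : x.imK = y.imK := congr_fun h 2
  ext <;> simp [hI, hJ, hK]

theorem stmt13_general {K : Type*} [Field K] [NumberField K]
    (L : Subalgebra (𝓞 K) ℍ[K]) (hfg : L.toSubmodule.FG)
    (q p : ℍ[K])
    (hqp : q * p = 1) (hpq : p * q = 1) :
    Submodule.map ((imVec K).restrictScalars (𝓞 K))
        (L.toSubmodule ⊓
          Submodule.map ((LinearMap.mulRight (𝓞 K) p).comp (LinearMap.mulLeft (𝓞 K) q))
            L.toSubmodule)
      = Submodule.map ((imVec K).restrictScalars (𝓞 K)) L.toSubmodule ⊓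
        Submodule.map ((imVec K).restrictScalars (𝓞 K))
          (Submodule.map ((LinearMap.mulRight (𝓞 K) p).comp (LinearMap.mulLeft (𝓞 K) q))
            L.toSubmodule) := by
  set φ := Units.innerAlgHom (𝓞 K) ⟨q, p, hqp, hpq⟩
  have hconj : Submodule.map ((LinearMap.mulRight (𝓞 K) p).comp (LinearMap.mulLeft (𝓞 K) q))
      L.toSubmodule = (L.map φ).toSubmodule := by
    rw [Subalgebra.map_toSubmodule]; rfl
  rw [hconj]
  refine le_antisymm (Submodule.map_inf_le _) ?_
  rintro v ⟨⟨x, hxL, rfl⟩, ⟨y, hy, hyx⟩⟩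
  have hx_int : IsIntegral (𝓞 K) x := IsIntegral.of_mem_of_fg L hfg x hxL
  have hy_int : IsIntegral (𝓞 K) y := by
    refine IsIntegral.of_mem_of_fg (L.map φ) ?_ y hy
    rw [Subalgebra.map_toSubmodule]
    exact hfg.map _
  have hxy := eq_add_algebraMap_of_imVec_eq hyx.symm
  refine ⟨x, ⟨hxL, ?_⟩, rfl⟩
  rw [hxy] at hx_int ⊢
  exact Subalgebra.add_algebraMap_mem_of_isIntegral hy hy_int hx_int

/-- For an order `L` in `ℍ(K)` and any nonzero `q ∈ L` (with two-sided inverse `p`),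
the intersection of the pure parts equals the pure part of the intersection:
`Im(L) ∩ Im(q L q⁻¹) = Im(L ∩ q L q⁻¹)`. -/
theorem stmt13 {K : Type*} [Field K] [NumberField K]
    (L : Subalgebra (𝓞 K) ℍ[K]) (hfg : L.toSubmodule.FG)
    (hspan : Submodule.span K (L : Set ℍ[K]) = ⊤)
    (q p : ℍ[K]) (hqL : q ∈ L) (hq : q ≠ 0)
    (hqp : q * p = 1) (hpq : p * q = 1) :
    Submodule.map ((imVec K).restrictScalars (𝓞 K))
        (L.toSubmodule ⊓
          Submodule.map ((LinearMap.mulRight (𝓞 K) p).comp (LinearMap.mulLeft (𝓞 K) q))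
            L.toSubmodule)
      = Submodule.map ((imVec K).restrictScalars (𝓞 K)) L.toSubmodule ⊓
        Submodule.map ((imVec K).restrictScalars (𝓞 K))
          (Submodule.map ((LinearMap.mulRight (𝓞 K) p).comp (LinearMap.mulLeft (𝓞 K) q))
            L.toSubmodule) :=
  stmt13_general L hfg q p hqp hpq
end

section
/- Let O be a maximal order in ℍ(K) with class number 1, q, r ∈ O with q O-primitive. If qO ⊆ rO then O ∩ qOq⁻¹ ⊆ O ∩ rOr⁻¹. -/
/-!
Write `q = r s` with `s ∈ O`. A finitely generated order is stable under quaternion conjugation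
and the reduced norms of its elements are integral scalars. Writing the left ideal
`O s̄ + O r = O d` as `s̄ = u d`, `r = v d` gives `q = v d d̄ ū = nrd(d) · v ū`, so primitivity
of `q` makes `nrd(d)` a unit and `1 ∈ O d`; conjugating, `s a + r̄ b = 1` with `a, b ∈ O`.
If `x ∈ O` and `x q = q y` with `y ∈ O`, then `z = s y a + r̄ x b ∈ O` satisfies `r z = x r`,
because `r r̄` is central.
-/

open Quaternion NumberField

instance stmt17_isScalarTower {K : Type*} [Field K] [NumberField K] :
    IsScalarTower (𝓞 K) ℍ[K] ℍ[K] := IsScalarTower.right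

instance stmt17_smulCommClass {K : Type*} [Field K] [NumberField K] :
    SMulCommClass (𝓞 K) ℍ[K] ℍ[K] := Algebra.to_smulCommClass

namespace Subalgebra

variable {R A : Type*} [CommRing R] [Ring A] [Algebra R A]

def LeftIdealsPrincipal (O : Subalgebra R A) : Prop :=
  ∀ I : Submodule R A, I ≤ O.toSubmodule → (∀ c ∈ O, ∀ x ∈ I, c * x ∈ I) →
    ∃ d ∈ O, I = Submodule.map (LinearMap.mulRight R d) O.toSubmodule

def IsPrimitive (O : Subalgebra R A) (q : A) : Prop :=
  ∀ (α : R) (s : A), s ∈ O → q = algebraMap R A α * s → IsUnit α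

variable {O : Subalgebra R A}

theorem mem_sup_map_mulRight {x y z : A} :
    z ∈ O.toSubmodule.map (LinearMap.mulRight R x) ⊔ O.toSubmodule.map (LinearMap.mulRight R y) ↔
      ∃ a ∈ O, ∃ b ∈ O, a * x + b * y = z := by
  simp [Submodule.mem_sup]

theorem LeftIdealsPrincipal.exists_bezout (hO : O.LeftIdealsPrincipal) {x y : A}
    (hx : x ∈ O) (hy : y ∈ O) :
    ∃ d ∈ O, (∃ u ∈ O, u * d = x) ∧ (∃ v ∈ O, v * d = y) ∧
      ∃ a ∈ O, ∃ b ∈ O, a * x + b * y = d := by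
  set I :=
    O.toSubmodule.map (LinearMap.mulRight R x) ⊔ O.toSubmodule.map (LinearMap.mulRight R y)
  have hIO : I ≤ O.toSubmodule := by
    rintro z hz
    obtain ⟨a, ha, b, hb, rfl⟩ := mem_sup_map_mulRight.mp hz
    exact O.add_mem (O.mul_mem ha hx) (O.mul_mem hb hy)
  have hI_mul : ∀ c ∈ O, ∀ z ∈ I, c * z ∈ I := by
    intro c hc z hz
    obtain ⟨a, ha, b, hb, rfl⟩ := mem_sup_map_mulRight.mp hz
    exact mem_sup_map_mulRight.mpr
      ⟨c * a, O.mul_mem hc ha, c * b, O.mul_mem hc hb, by simp only [mul_add, mul_assoc]⟩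
  obtain ⟨d, hd, hI⟩ := hO I hIO hI_mul
  have mem_I {z : A} : z ∈ I ↔ ∃ w ∈ O, w * d = z := by simp [hI]
  refine ⟨d, hd, mem_I.mp ?_, mem_I.mp ?_,
    mem_sup_map_mulRight.mp (mem_I.mpr ⟨1, O.one_mem, one_mul d⟩)⟩
  · exact mem_sup_map_mulRight.mpr ⟨1, O.one_mem, 0, O.zero_mem, by simp⟩
  · exact mem_sup_map_mulRight.mpr ⟨0, O.zero_mem, 1, O.one_mem, by simp⟩

end Subalgebra

section

variable {R K : Type*} [CommRing R] [Field K] [Algebra R K]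

theorem Quaternion.isIntegral_star_s17 {x : ℍ[K]} (hx : IsIntegral R x) : IsIntegral R (star x) := by
  obtain ⟨p, hp, h⟩ := hx.map (Quaternion.starAe (R := K))
  refine ⟨p, hp, ?_⟩
  rw [← Polynomial.aeval_def] at h ⊢
  rwa [coe_starAe, Function.comp_apply, Polynomial.aeval_op_apply, MulOpposite.op_eq_zero_iff] at h

open scoped IsMulCommutative in
theorem Quaternion.isIntegral_self_add_star {x : ℍ[K]} (hx : IsIntegral R x) :
    IsIntegral R (x + star x) := by
  -- `x` and `star x` commute, so they generate a commutative subalgebra, where `IsIntegral.add`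
  -- applies.
  have := Algebra.isMulCommutative_adjoin R (s := {x, star x}) <| by
    rintro a (rfl | rfl) b (rfl | rfl) <;> simp [self_mul_star, star_mul_self]
  let C := Algebra.adjoin R ({x, star x} : Set ℍ[K])
  have hint (y : C) (hy : IsIntegral R (y : ℍ[K])) : IsIntegral R y :=
    (isIntegral_algHom_iff C.val Subtype.val_injective).mp hy
  have hxC : IsIntegral R (⟨x, Algebra.subset_adjoin (by simp)⟩ : C) := hint _ hx
  have hsC : IsIntegral R (⟨star x, Algebra.subset_adjoin (by simp)⟩ : C) :=
    hint _ (isIntegral_star_s17 hx)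
  exact (hxC.add hsC).map C.val

variable [IsIntegrallyClosed R] [IsFractionRing R K]

theorem Quaternion.exists_algebraMap_eq_of_isIntegral_coe {c : K}
    (h : IsIntegral R (c : ℍ[K])) : ∃ α : R, algebraMap R ℍ[K] α = c := by
  have hc : IsIntegral R c :=
    (isIntegral_algHom_iff (IsScalarTower.toAlgHom R K ℍ[K]) (algebraMap K ℍ[K]).injective).mp h
  obtain ⟨α, rfl⟩ := IsIntegrallyClosed.isIntegral_iff.mp hc
  exact ⟨α, IsScalarTower.algebraMap_apply R K ℍ[K] α⟩

namespace Subalgebra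

variable {O : Subalgebra R ℍ[K]}

theorem star_mem_of_fg (hO : O.toSubmodule.FG) {w : ℍ[K]} (hw : w ∈ O) : star w ∈ O := by
  have htr := isIntegral_self_add_star (IsIntegral.of_mem_of_fg O hO w hw)
  rw [self_add_star'] at htr
  obtain ⟨α, hα⟩ := exists_algebraMap_eq_of_isIntegral_coe htr
  have : star w = algebraMap R ℍ[K] α - w := by rw [hα, ← self_add_star', add_sub_cancel_left]
  exact this ▸ O.sub_mem (O.algebraMap_mem α) hw

theorem exists_algebraMap_eq_star_mul_self_of_fg (hO : O.toSubmodule.FG) {w : ℍ[K]}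
    (hw : w ∈ O) : ∃ ν : R, algebraMap R ℍ[K] ν = star w * w := by
  have hn := IsIntegral.of_mem_of_fg O hO _ (O.mul_mem (star_mem_of_fg hO hw) hw)
  rw [star_mul_self] at hn ⊢
  exact exists_algebraMap_eq_of_isIntegral_coe hn

theorem exists_mul_add_star_mul_eq_one (hO : O.toSubmodule.FG)
    (hclass : O.LeftIdealsPrincipal) {r s : ℍ[K]} (hr : r ∈ O) (hs : s ∈ O)
    (hprim : O.IsPrimitive (r * s)) :
    ∃ a ∈ O, ∃ b ∈ O, s * a + star r * b = 1 := by
  obtain ⟨d, hd, ⟨u, hu, hud⟩, ⟨v, hv, rfl⟩, a, ha, b, hb, hab⟩ :=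
    hclass.exists_bezout (star_mem_of_fg hO hs) hr
  obtain ⟨ν, hν⟩ := exists_algebraMap_eq_star_mul_self_of_fg hO hd
  have hq : v * d * s = algebraMap R ℍ[K] ν * (v * star u) := by
    have hs' : s = star d * star u := by rw [← star_mul, hud, star_star]
    calc v * d * s = v * (d * star d) * star u := by rw [hs']; simp only [mul_assoc]
      _ = v * algebraMap R ℍ[K] ν * star u := by rw [hν, star_mul_self, self_mul_star]
      _ = algebraMap R ℍ[K] ν * (v * star u) := by rw [← Algebra.commutes, mul_assoc]
  obtain ⟨μ, hμ⟩ := (hprim ν _ (O.mul_mem hv (star_mem_of_fg hO hu)) hq).exists_left_inv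
  set c := algebraMap R ℍ[K] μ * star d
  have hc : c * a * star s + c * b * (v * d) = 1 := by
    calc c * a * star s + c * b * (v * d) = c * (a * star s + b * (v * d)) := by
          simp only [mul_add, mul_assoc]
      _ = algebraMap R ℍ[K] μ * (star d * d) := by rw [hab, mul_assoc]
      _ = 1 := by rw [← hν, ← map_mul, hμ, map_one]
  have hcO : c ∈ O := O.mul_mem (O.algebraMap_mem μ) (star_mem_of_fg hO hd)
  refine ⟨star (c * a), star_mem_of_fg hO (O.mul_mem hcO ha),
    star (c * b), star_mem_of_fg hO (O.mul_mem hcO hb), ?_⟩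
  simpa only [star_add, star_mul, star_star, star_one] using congrArg star hc

end Subalgebra

end

theorem mul_eq_mul_of_mul_add_mul_eq_one {A : Type*} [Ring A] {r r' s a b x y : A}
    (hcomm : Commute x (r * r')) (hxy : x * (r * s) = r * s * y) (hab : s * a + r' * b = 1) :
    r * (s * y * a + r' * x * b) = x * r :=
  calc r * (s * y * a + r' * x * b) = r * s * y * a + r * r' * x * b := by
        simp only [mul_add, mul_assoc]
    _ = x * (r * s) * a + x * (r * r') * b := by rw [hxy, hcomm.eq]
    _ = x * r * (s * a + r' * b) := by simp only [mul_add, mul_assoc]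
    _ = x * r := by rw [hab, mul_one]

theorem stmt17_general {K : Type*} [Field K] [NumberField K]
    (O : Subalgebra (𝓞 K) ℍ[K]) (hfg : O.toSubmodule.FG)
    (hclass : ∀ I : Submodule (𝓞 K) ℍ[K], I ≤ O.toSubmodule →
      (∀ c ∈ O, ∀ x ∈ I, c * x ∈ I) →
      ∃ d ∈ O, I = Submodule.map (LinearMap.mulRight (𝓞 K) d) O.toSubmodule)
    (q r q' r' : ℍ[K]) (hrO : r ∈ O)
    (hq'q : q' * q = 1)
    (hrr' : r * r' = 1)
    (hqprim : ∀ (α : 𝓞 K) (s : ℍ[K]), s ∈ O →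
      q = algebraMap (𝓞 K) ℍ[K] α * s → IsUnit α)
    (hsub : Submodule.map (LinearMap.mulLeft (𝓞 K) q) O.toSubmodule
      ≤ Submodule.map (LinearMap.mulLeft (𝓞 K) r) O.toSubmodule) :
    O.toSubmodule ⊓
        Submodule.map ((LinearMap.mulRight (𝓞 K) q').comp (LinearMap.mulLeft (𝓞 K) q))
          O.toSubmodule
      ≤ O.toSubmodule ⊓
        Submodule.map ((LinearMap.mulRight (𝓞 K) r').comp (LinearMap.mulLeft (𝓞 K) r))
          O.toSubmodule := by
  obtain ⟨s, hsO, rfl⟩ : ∃ s ∈ O, r * s = q := hsub ⟨1, O.one_mem, mul_one q⟩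
  obtain ⟨a, ha, b, hb, hab⟩ :=
    Subalgebra.exists_mul_add_star_mul_eq_one hfg hclass hrO hsO hqprim
  rintro x ⟨hxO, y, hyO, hy : r * s * y * q' = x⟩
  have hxq : x * (r * s) = r * s * y := by rw [← hy, mul_assoc _ q', hq'q, mul_one]
  have hcomm : Commute x (r * star r) := by rw [self_mul_star]; exact (coe_commutes _ x).symm
  refine ⟨hxO, s * y * a + star r * x * b, ?_, ?_⟩
  · have hsr : star r ∈ O := Subalgebra.star_mem_of_fg hfg hrO
    exact O.add_mem (O.mul_mem (O.mul_mem hsO hyO) ha) (O.mul_mem (O.mul_mem hsr hxO) hb)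
  · change r * _ * r' = x
    rw [mul_eq_mul_of_mul_add_mul_eq_one hcomm hxq hab, mul_assoc, hrr', mul_one]

/-- Let `O` be a maximal order in `ℍ(K)` with class number 1 (every left ideal of
`O` is principal), and `q, r ∈ O` with `q` `O`-primitive (with given two-sided
inverses `q'`, `r'` in `ℍ(K)`). If `qO ⊆ rO`, then `O ∩ qOq⁻¹ ⊆ O ∩ rOr⁻¹`. -/
theorem stmt17 {K : Type*} [Field K] [NumberField K]
    (h1 : IsPrincipalIdealRing (𝓞 K))
    (O : Subalgebra (𝓞 K) ℍ[K]) (hfg : O.toSubmodule.FG)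
    (hspan : Submodule.span K (O : Set ℍ[K]) = ⊤)
    (hmax : ∀ O' : Subalgebra (𝓞 K) ℍ[K], O'.toSubmodule.FG →
      Submodule.span K (O' : Set ℍ[K]) = ⊤ → O ≤ O' → O' = O)
    (hclass : ∀ I : Submodule (𝓞 K) ℍ[K], I ≤ O.toSubmodule →
      (∀ c ∈ O, ∀ x ∈ I, c * x ∈ I) →
      ∃ d ∈ O, I = Submodule.map (LinearMap.mulRight (𝓞 K) d) O.toSubmodule)
    (q r q' r' : ℍ[K]) (hqO : q ∈ O) (hrO : r ∈ O)
    (hqq' : q * q' = 1) (hq'q : q' * q = 1)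
    (hrr' : r * r' = 1) (hr'r : r' * r = 1)
    (hqprim : ∀ (α : 𝓞 K) (s : ℍ[K]), s ∈ O →
      q = algebraMap (𝓞 K) ℍ[K] α * s → IsUnit α)
    (hsub : Submodule.map (LinearMap.mulLeft (𝓞 K) q) O.toSubmodule
      ≤ Submodule.map (LinearMap.mulLeft (𝓞 K) r) O.toSubmodule) :
    O.toSubmodule ⊓
        Submodule.map ((LinearMap.mulRight (𝓞 K) q').comp (LinearMap.mulLeft (𝓞 K) q))
          O.toSubmodule
      ≤ O.toSubmodule ⊓
        Submodule.map ((LinearMap.mulRight (𝓞 K) r').comp (LinearMap.mulLeft (𝓞 K) r))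
          O.toSubmodule :=
  stmt17_general O hfg hclass q r q' r' hrO hq'q hrr' hqprim hsub
end

section
/- An element q of the Hurwitz order 𝕁 is 𝕁-reduced (no non-unit divisor of q generates a two-sided ideal of 𝕁) if and only if q is 𝕁-primitive and nr(q) is odd. -/
/-!
The integers `n > 1` and `1 + i` (of norm 2) generate proper two-sided ideals of `𝕁`, so a reduced
`q` is primitive, and its norm is odd because every element of even norm is left divisible by
`1 + i`. Conversely, let `p` be a divisor of `q` with `p𝕁 = 𝕁p`; its norm divides `nr(q)`, hence
is odd. Conjugation by `p` preserves norm and real part, so it sends `i` and `j` to pure units of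
`𝕁`, i.e. into `{±i, ±j, ±k}`. Composing with a unit `v` that rotates `p i p⁻¹` back to `i`,
`v p` commutes with `i`, hence `v p = a + b i` with `a, b ∈ ℤ`; then `(v p) j (v p)⁻¹ = ±k` would
force `nr(p) = 2a²` and `±i` would force `v p = 0`, so `v p = a` or `v p = b i`. Thus `p = n u`
with `u` a unit and `n ∈ ℤ`, and primitivity of `q` gives `n = ±1`.
-/

open Quaternion

/-- Membership in the Hurwitz ring `𝕁 = ⟨1, i, j, (1+i+j+k)/2⟩_ℤ ⊂ ℍ(ℚ)`:
all four coordinates are integers, or all four are half-odd-integers. -/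
def IsHurwitz (q : ℍ[ℚ]) : Prop :=
  (∃ a b c d : ℤ, q = (⟨(a : ℚ), (b : ℚ), (c : ℚ), (d : ℚ)⟩ : ℍ[ℚ])) ∨
  (∃ a b c d : ℤ, q =
    (⟨(a : ℚ) + 1/2, (b : ℚ) + 1/2, (c : ℚ) + 1/2, (d : ℚ) + 1/2⟩ : ℍ[ℚ]))

/-- `q` is `𝕁`-primitive: `q/n ∉ 𝕁` for every integer `n > 1`. -/
def HurwitzPrimitive (q : ℍ[ℚ]) : Prop :=
  ∀ n : ℤ, 1 < n → ¬ ∃ r : ℍ[ℚ], IsHurwitz r ∧ q = (n : ℚ) • r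

/-- `p` generates a two-sided ideal of `𝕁`: `p𝕁 = 𝕁p`. -/
def GeneratesTwoSided (p : ℍ[ℚ]) : Prop :=
  {x : ℍ[ℚ] | ∃ y, IsHurwitz y ∧ x = p * y} =
    {x : ℍ[ℚ] | ∃ y, IsHurwitz y ∧ x = y * p}

/-- `p` is a unit of the Hurwitz ring. -/
def HurwitzUnit (p : ℍ[ℚ]) : Prop :=
  ∃ u : ℍ[ℚ], IsHurwitz u ∧ p * u = 1 ∧ u * p = 1

/-- `q` is `𝕁`-reduced: no non-unit divisor of `q` generates a two-sided ideal. -/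
def HurwitzReduced (q : ℍ[ℚ]) : Prop :=
  ∀ p a b : ℍ[ℚ], IsHurwitz p → IsHurwitz a → IsHurwitz b →
    q = a * p * b → GeneratesTwoSided p → HurwitzUnit p

namespace Quaternion

variable {R : Type*} [CommRing R]

theorem re_mul_comm (x y : ℍ[R]) : (x * y).re = (y * x).re := by
  simp only [re_mul]; ring

variable [LinearOrder R] [IsStrictOrderedRing R]

theorem normSq_eq_of_mul_eq_mul {p x y : ℍ[R]} (hp : p ≠ 0) (h : p * x = y * p) :
    normSq y = normSq x := by
  have := congrArg normSq h
  rw [map_mul, map_mul, mul_comm (normSq p)] at this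
  exact (mul_right_cancel₀ (normSq_ne_zero.2 hp) this).symm

theorem re_eq_of_mul_eq_mul {p x y : ℍ[R]} (hp : p ≠ 0) (h : p * x = y * p) : y.re = x.re := by
  have key : normSq p * y.re = normSq p * x.re := by
    calc normSq p * y.re = (y * (p * star p)).re := by
          rw [self_mul_star, ← coe_commutes, coe_mul_eq_smul, re_smul, smul_eq_mul]
      _ = (p * x * star p).re := by rw [h, mul_assoc]
      _ = (star p * p * x).re := by rw [re_mul_comm, mul_assoc]
      _ = normSq p * x.re := by rw [star_mul_self, coe_mul_eq_smul, re_smul, smul_eq_mul]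
  exact mul_left_cancel₀ (normSq_ne_zero.2 hp) key

end Quaternion

/-- `a + b i + c j + d k`, typed as `ℍ[ℚ]` rather than `ℍ[ℚ,-1,-1]` (as the anonymous constructor
is), so that the `Quaternion` simp lemmas apply to it. -/
def quat (a b c d : ℚ) : ℍ[ℚ] := ⟨a, b, c, d⟩

section quat

variable (a b c d : ℚ)

@[simp] theorem re_quat : (quat a b c d).re = a := rfl
@[simp] theorem imI_quat : (quat a b c d).imI = b := rfl
@[simp] theorem imJ_quat : (quat a b c d).imJ = c := rfl
@[simp] theorem imK_quat : (quat a b c d).imK = d := rfl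

@[simp] theorem normSq_quat : normSq (quat a b c d) = a ^ 2 + b ^ 2 + c ^ 2 + d ^ 2 :=
  normSq_def' _

end quat

theorem isHurwitz_iff {q : ℍ[ℚ]} : IsHurwitz q ↔
    (∃ a b c d : ℤ, q = quat a b c d) ∨
      ∃ a b c d : ℤ, q = quat (a + 1/2) (b + 1/2) (c + 1/2) (d + 1/2) :=
  Iff.rfl

theorem intCast_add_half_ne_zero (a : ℤ) : (a : ℚ) + 1/2 ≠ 0 := by
  intro h
  have : (2 * a + 1 : ℤ) = 0 := by exact_mod_cast (by linarith : (2 * a + 1 : ℚ) = 0)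
  omega

theorem ne_zero_of_normSq_eq_two_mul_add_one {p : ℍ[ℚ]} (h : ∃ k : ℤ, normSq p = 2 * k + 1) :
    p ≠ 0 := by
  rintro rfl
  obtain ⟨k, hk⟩ := h
  have : (0 : ℤ) = 2 * k + 1 := by exact_mod_cast (map_zero normSq).symm.trans hk
  omega

theorem isHurwitz_intCast (n : ℤ) : IsHurwitz (n : ℍ[ℚ]) :=
  Or.inl ⟨n, 0, 0, 0, by ext <;> simp⟩

theorem isHurwitz_one : IsHurwitz 1 := by
  simpa using isHurwitz_intCast 1

theorem isHurwitz_quat_int (a b c d : ℤ) : IsHurwitz (quat a b c d) :=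
  Or.inl ⟨a, b, c, d, rfl⟩

namespace IsHurwitz

variable {x y : ℍ[ℚ]}

theorem neg (hx : IsHurwitz x) : IsHurwitz (-x) := by
  obtain ⟨a, b, c, d, rfl⟩ | ⟨a, b, c, d, rfl⟩ := isHurwitz_iff.1 hx
  · exact Or.inl ⟨-a, -b, -c, -d, by ext <;> simp⟩
  · exact Or.inr ⟨-a - 1, -b - 1, -c - 1, -d - 1, by ext <;> simp <;> ring⟩

theorem star (hx : IsHurwitz x) : IsHurwitz (star x) := by
  obtain ⟨a, b, c, d, rfl⟩ | ⟨a, b, c, d, rfl⟩ := isHurwitz_iff.1 hx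
  · exact Or.inl ⟨a, -b, -c, -d, by ext <;> simp⟩
  · exact Or.inr ⟨a, -b - 1, -c - 1, -d - 1, by ext <;> simp <;> ring⟩

theorem mul (hx : IsHurwitz x) (hy : IsHurwitz y) : IsHurwitz (x * y) := by
  obtain ⟨a, b, c, d, rfl⟩ | ⟨a, b, c, d, rfl⟩ := isHurwitz_iff.1 hx <;>
    obtain ⟨e, f, g, h, rfl⟩ | ⟨e, f, g, h, rfl⟩ := isHurwitz_iff.1 hy
  · exact Or.inl ⟨a*e - b*f - c*g - d*h, a*f + b*e + c*h - d*g, a*g - b*h + c*e + d*f,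
      a*h + b*g - c*f + d*e, by ext <;> simp⟩
  -- In the mixed cases, e.g. `(x y).re = (a e - b f - c g - d h) + (a - b - c - d) / 2`, where
  -- `(a - b - c - d) / 2 = m - b - c - d (+ 1/2)` if `a + b + c + d = 2 m (+ 1)`.
  · obtain ⟨m, hm | hm⟩ := Int.even_or_odd' (a + b + c + d) <;>
      have hm' : ((a + b + c + d : ℤ) : ℚ) = _ := congrArg (Int.cast : ℤ → ℚ) hm <;> push_cast at hm'
    · exact Or.inl ⟨a*e - b*f - c*g - d*h + m - b - c - d, a*f + b*e + c*h - d*g + m - d,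
        a*g - b*h + c*e + d*f + m - b, a*h + b*g - c*f + d*e + m - c,
        by ext <;> simp <;> linear_combination hm' / 2⟩
    · exact Or.inr ⟨a*e - b*f - c*g - d*h + m - b - c - d, a*f + b*e + c*h - d*g + m - d,
        a*g - b*h + c*e + d*f + m - b, a*h + b*g - c*f + d*e + m - c,
        by ext <;> simp <;> linear_combination hm' / 2⟩
  · obtain ⟨m, hm | hm⟩ := Int.even_or_odd' (e + f + g + h) <;>
      have hm' : ((e + f + g + h : ℤ) : ℚ) = _ := congrArg (Int.cast : ℤ → ℚ) hm <;> push_cast at hm'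
    · exact Or.inl ⟨a*e - b*f - c*g - d*h + m - f - g - h, a*f + b*e + c*h - d*g + m - g,
        a*g - b*h + c*e + d*f + m - h, a*h + b*g - c*f + d*e + m - f,
        by ext <;> simp <;> linear_combination hm' / 2⟩
    · exact Or.inr ⟨a*e - b*f - c*g - d*h + m - f - g - h, a*f + b*e + c*h - d*g + m - g,
        a*g - b*h + c*e + d*f + m - h, a*h + b*g - c*f + d*e + m - f,
        by ext <;> simp <;> linear_combination hm' / 2⟩
  · obtain ⟨m, hm | hm⟩ := Int.even_or_odd' (a + b + c + d + e + f + g + h) <;>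
      have hm' : ((a + b + c + d + e + f + g + h : ℤ) : ℚ) = _ := congrArg (Int.cast : ℤ → ℚ) hm <;>
      push_cast at hm'
    · exact Or.inr ⟨a*e - b*f - c*g - d*h + m - b - c - d - f - g - h - 1,
        a*f + b*e + c*h - d*g + m - d - g, a*g - b*h + c*e + d*f + m - b - h,
        a*h + b*g - c*f + d*e + m - c - f, by ext <;> simp <;> linear_combination hm' / 2⟩
    · exact Or.inl ⟨a*e - b*f - c*g - d*h + m - b - c - d - f - g - h,
        a*f + b*e + c*h - d*g + m - d - g + 1, a*g - b*h + c*e + d*f + m - b - h + 1,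
        a*h + b*g - c*f + d*e + m - c - f + 1, by ext <;> simp <;> linear_combination hm' / 2⟩

theorem exists_normSq_eq (hx : IsHurwitz x) : ∃ N : ℤ, normSq x = N := by
  obtain ⟨a, b, c, d, rfl⟩ | ⟨a, b, c, d, rfl⟩ := isHurwitz_iff.1 hx
  · exact ⟨a ^ 2 + b ^ 2 + c ^ 2 + d ^ 2, by simp⟩
  · exact ⟨a ^ 2 + b ^ 2 + c ^ 2 + d ^ 2 + a + b + c + d + 1, by simp; ring⟩

end IsHurwitz

theorem hurwitzUnit_iff {p : ℍ[ℚ]} (hp : IsHurwitz p) : HurwitzUnit p ↔ normSq p = 1 := by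
  constructor
  · rintro ⟨u, hu, hpu, -⟩
    obtain ⟨P, hP⟩ := hp.exists_normSq_eq
    obtain ⟨U, hU⟩ := hu.exists_normSq_eq
    have hPU : P * U = 1 := by
      have := congrArg normSq hpu
      rw [map_mul, map_one, hP, hU] at this
      exact_mod_cast this
    have hP0 : 0 ≤ P := by
      have := normSq_nonneg (a := p)
      rw [hP] at this
      exact_mod_cast this
    rw [hP, Int.eq_one_of_mul_eq_one_right hP0 hPU, Int.cast_one]
  · intro h
    exact ⟨star p, hp.star, by simp [self_mul_star, h], by simp [star_mul_self, h]⟩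

theorem generatesTwoSided_of_commute {p : ℍ[ℚ]} (h : ∀ y, p * y = y * p) :
    GeneratesTwoSided p := by
  simp only [GeneratesTwoSided, h]

theorem generatesTwoSided_intCast (n : ℤ) : GeneratesTwoSided (n : ℍ[ℚ]) :=
  generatesTwoSided_of_commute (Int.cast_comm n)

/-- Conjugation by `1 + i` fixes `1, i` and sends `j ↦ k ↦ -j`, so it preserves `𝕁`. -/
theorem generatesTwoSided_one_add_i : GeneratesTwoSided (quat 1 1 0 0) := by
  ext x
  constructor
  · rintro ⟨y, hy, rfl⟩
    refine ⟨quat y.re y.imI (-y.imK) y.imJ, ?_, by ext <;> simp <;> ring⟩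
    rcases isHurwitz_iff.1 hy with ⟨a, b, c, d, rfl⟩ | ⟨a, b, c, d, rfl⟩
    · exact Or.inl ⟨a, b, -d, c, by ext <;> simp⟩
    · exact Or.inr ⟨a, b, -d - 1, c, by ext <;> simp; ring⟩
  · rintro ⟨y, hy, rfl⟩
    refine ⟨quat y.re y.imI y.imK (-y.imJ), ?_, by ext <;> simp <;> ring⟩
    rcases isHurwitz_iff.1 hy with ⟨a, b, c, d, rfl⟩ | ⟨a, b, c, d, rfl⟩
    · exact Or.inl ⟨a, b, d, -c, by ext <;> simp⟩
    · exact Or.inr ⟨a, b, d, -c - 1, by ext <;> simp; ring⟩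

theorem IsHurwitz.exists_eq_one_add_i_mul {q : ℍ[ℚ]} (hq : IsHurwitz q)
    (heven : ∃ k : ℤ, normSq q = 2 * k) : ∃ r, IsHurwitz r ∧ q = quat 1 1 0 0 * r := by
  obtain ⟨k, hk⟩ := heven
  rcases isHurwitz_iff.1 hq with ⟨a, b, c, d, rfl⟩ | ⟨a, b, c, d, rfl⟩
  · have hk' : a ^ 2 + b ^ 2 + c ^ 2 + d ^ 2 = 2 * k := by
      have : ((a ^ 2 + b ^ 2 + c ^ 2 + d ^ 2 : ℤ) : ℚ) = 2 * k := by simpa using hk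
      exact_mod_cast this
    obtain ⟨m, hm⟩ : Even (a + b + c + d) := by
      have : Even (a ^ 2 + b ^ 2 + c ^ 2 + d ^ 2) := ⟨k, by omega⟩
      simpa [parity_simps] using this
    -- `r = (1 - i) q / 2`
    refine ⟨quat ((a + b) / 2) ((b - a) / 2) ((c + d) / 2) ((d - c) / 2), ?_,
      by ext <;> simp <;> ring⟩
    have hm' : (a + b + c + d : ℚ) = m + m := by exact_mod_cast hm
    obtain ⟨s, hs | hs⟩ := Int.even_or_odd' (a + b) <;>
      have hs' : ((a + b : ℤ) : ℚ) = _ := congrArg (Int.cast : ℤ → ℚ) hs <;> push_cast at hs'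
    · exact Or.inl ⟨s, s - a, m - s, m - s - c, by ext <;> simp <;> linarith⟩
    · exact Or.inr ⟨s, s - a, m - s - 1, m - s - 1 - c, by ext <;> simp <;> linarith⟩
  · exfalso
    have hk' : a ^ 2 + b ^ 2 + c ^ 2 + d ^ 2 + a + b + c + d + 1 = 2 * k := by
      have : ((a ^ 2 + b ^ 2 + c ^ 2 + d ^ 2 + a + b + c + d + 1 : ℤ) : ℚ) = 2 * k := by
        rw [normSq_quat] at hk
        push_cast
        linear_combination hk
      exact_mod_cast this
    have : Even (a ^ 2 + b ^ 2 + c ^ 2 + d ^ 2 + a + b + c + d + 1) := ⟨k, by omega⟩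
    simp only [Int.even_add, Int.even_pow] at this
    tauto

theorem HurwitzReduced.normSq_eq_one_of_eq_mul {q p r : ℍ[ℚ]} (h : HurwitzReduced q)
    (hp : IsHurwitz p) (hr : IsHurwitz r) (hq : q = p * r) (htwo : GeneratesTwoSided p) :
    normSq p = 1 :=
  (hurwitzUnit_iff hp).1 (h p 1 r hp isHurwitz_one hr (by rw [one_mul, hq]) htwo)

theorem HurwitzReduced.hurwitzPrimitive {q : ℍ[ℚ]} (h : HurwitzReduced q) :
    HurwitzPrimitive q := by
  rintro n hn ⟨r, hr, rfl⟩
  have hn1 := h.normSq_eq_one_of_eq_mul (isHurwitz_intCast n) hr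
    (by rw [Int.cast_smul_eq_zsmul, zsmul_eq_mul]) (generatesTwoSided_intCast n)
  rw [normSq_intCast] at hn1
  have : n ^ 2 = 1 := by exact_mod_cast hn1
  nlinarith

theorem HurwitzReduced.exists_normSq_eq_two_mul_add_one {q : ℍ[ℚ]} (hq : IsHurwitz q)
    (h : HurwitzReduced q) : ∃ k : ℤ, normSq q = 2 * k + 1 := by
  obtain ⟨N, hN⟩ := hq.exists_normSq_eq
  obtain ⟨k, rfl | rfl⟩ := Int.even_or_odd' N
  · obtain ⟨r, hr, hqr⟩ := hq.exists_eq_one_add_i_mul ⟨k, by rw [hN]; push_cast; ring⟩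
    have h2 := h.normSq_eq_one_of_eq_mul (by simpa using isHurwitz_quat_int 1 1 0 0) hr hqr
      generatesTwoSided_one_add_i
    norm_num at h2
  · exact ⟨k, by rw [hN]; push_cast; ring⟩

theorem IsHurwitz.eq_axis_of_normSq_eq_one {y : ℍ[ℚ]} (hy : IsHurwitz y) (hn : normSq y = 1)
    (hre : y.re = 0) :
    y = quat 0 1 0 0 ∨ y = quat 0 (-1) 0 0 ∨ y = quat 0 0 1 0 ∨ y = quat 0 0 (-1) 0 ∨
      y = quat 0 0 0 1 ∨ y = quat 0 0 0 (-1) := by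
  rcases isHurwitz_iff.1 hy with ⟨a, b, c, d, rfl⟩ | ⟨a, b, c, d, rfl⟩
  · obtain rfl : a = 0 := by rw [re_quat] at hre; exact_mod_cast hre
    have hn' : b ^ 2 + c ^ 2 + d ^ 2 = 1 := by
      have : ((b ^ 2 + c ^ 2 + d ^ 2 : ℤ) : ℚ) = 1 := by simpa using hn
      exact_mod_cast this
    obtain ⟨hb1, hb2⟩ : b ≤ 1 ∧ -1 ≤ b := ⟨by nlinarith, by nlinarith⟩
    obtain ⟨hc1, hc2⟩ : c ≤ 1 ∧ -1 ≤ c := ⟨by nlinarith, by nlinarith⟩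
    obtain ⟨hd1, hd2⟩ : d ≤ 1 ∧ -1 ≤ d := ⟨by nlinarith, by nlinarith⟩
    interval_cases b <;> interval_cases c <;> interval_cases d <;> simp_all
  · exact absurd hre (intCast_add_half_ne_zero a)

theorem exists_hurwitzUnit_mul_eq_i_mul {y : ℍ[ℚ]} (hy : IsHurwitz y) (hn : normSq y = 1)
    (hre : y.re = 0) :
    ∃ v, IsHurwitz v ∧ normSq v = 1 ∧ v * y = quat 0 1 0 0 * v := by
  rcases hy.eq_axis_of_normSq_eq_one hn hre with rfl | rfl | rfl | rfl | rfl | rfl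
  · exact ⟨1, isHurwitz_one, by simp, by simp⟩
  · exact ⟨quat 0 0 1 0, by simpa using isHurwitz_quat_int 0 0 1 0, by simp, by ext <;> simp⟩
  · exact ⟨quat (1/2) (-1/2) (-1/2) (-1/2), Or.inr ⟨0, -1, -1, -1, by ext <;> norm_num⟩,
      by norm_num, by ext <;> norm_num⟩
  · exact ⟨quat (1/2) (1/2) (-1/2) (1/2), Or.inr ⟨0, 0, -1, 0, by ext <;> norm_num⟩,
      by norm_num, by ext <;> norm_num⟩
  · exact ⟨quat (1/2) (1/2) (1/2) (1/2), Or.inr ⟨0, 0, 0, 0, by ext <;> norm_num⟩,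
      by norm_num, by ext <;> norm_num⟩
  · exact ⟨quat (1/2) (-1/2) (-1/2) (1/2), Or.inr ⟨0, -1, -1, 0, by ext <;> norm_num⟩,
      by norm_num, by ext <;> norm_num⟩

theorem IsHurwitz.exists_eq_smul_of_commute_i {p y : ℍ[ℚ]} (hp : IsHurwitz p)
    (hodd : ∃ k : ℤ, normSq p = 2 * k + 1) (hi : p * quat 0 1 0 0 = quat 0 1 0 0 * p)
    (hy : IsHurwitz y) (hj : p * quat 0 0 1 0 = y * p) :
    ∃ (r : ℤ) (u : ℍ[ℚ]), IsHurwitz u ∧ normSq u = 1 ∧ p = (r : ℚ) • u := by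
  have hp0 := ne_zero_of_normSq_eq_two_mul_add_one hodd
  obtain ⟨k, hk⟩ := hodd
  have hy_axis := hy.eq_axis_of_normSq_eq_one (by rw [normSq_eq_of_mul_eq_mul hp0 hj]; simp)
    (by rw [re_eq_of_mul_eq_mul hp0 hj]; simp)
  rcases isHurwitz_iff.1 hp with ⟨a, b, c, d, rfl⟩ | ⟨a, b, c, d, rfl⟩ <;>
    simp [Quaternion.ext_iff] at hi
  · obtain ⟨rfl, rfl⟩ : c = 0 ∧ d = 0 := by
      constructor
      · exact_mod_cast (by linarith [hi.2] : (c : ℚ) = 0)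
      · exact_mod_cast (by linarith [hi.1] : (d : ℚ) = 0)
    have hk' : a ^ 2 + b ^ 2 = 2 * k + 1 := by
      have : ((a ^ 2 + b ^ 2 : ℤ) : ℚ) = 2 * k + 1 := by simpa using hk
      exact_mod_cast this
    rcases hy_axis with rfl | rfl | rfl | rfl | rfl | rfl <;> simp [Quaternion.ext_iff] at hj
    · obtain ⟨-, -, rfl, rfl⟩ := hj
      omega
    · obtain ⟨-, rfl, rfl⟩ := hj
      omega
    · obtain rfl : b = 0 := by exact_mod_cast (by linarith : (b : ℚ) = 0)
      exact ⟨a, 1, isHurwitz_one, by simp, by ext <;> simp⟩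
    · obtain rfl : a = 0 := by exact_mod_cast (by linarith : (a : ℚ) = 0)
      exact ⟨b, quat 0 1 0 0, by simpa using isHurwitz_quat_int 0 1 0 0, by simp,
        by ext <;> simp⟩
    · obtain ⟨rfl, -⟩ := hj
      omega
    · obtain rfl : a = -b := by exact_mod_cast hj.1
      rw [neg_sq] at hk'
      omega
  · exact absurd (by linarith [hi.1]) (intCast_add_half_ne_zero d)

theorem exists_eq_smul_of_generatesTwoSided {p : ℍ[ℚ]} (hp : IsHurwitz p)
    (hodd : ∃ k : ℤ, normSq p = 2 * k + 1) (htwo : GeneratesTwoSided p) :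
    ∃ (r : ℤ) (u : ℍ[ℚ]), IsHurwitz u ∧ normSq u = 1 ∧ p = (r : ℚ) • u := by
  have hp0 := ne_zero_of_normSq_eq_two_mul_add_one hodd
  have conj : ∀ x, IsHurwitz x → ∃ y, IsHurwitz y ∧ p * x = y * p := fun x hx =>
    (Set.ext_iff.1 htwo (p * x)).1 ⟨x, hx, rfl⟩
  obtain ⟨y₁, hy₁, hi⟩ := conj _ (by simpa using isHurwitz_quat_int 0 1 0 0)
  obtain ⟨y₂, hy₂, hj⟩ := conj _ (by simpa using isHurwitz_quat_int 0 0 1 0)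
  obtain ⟨v, hv, hvn, hvy⟩ := exists_hurwitzUnit_mul_eq_i_mul hy₁
    (by rw [normSq_eq_of_mul_eq_mul hp0 hi]; simp) (by rw [re_eq_of_mul_eq_mul hp0 hi]; simp)
  have hvv : star v * v = 1 := by rw [star_mul_self, hvn, coe_one]
  obtain ⟨r, u, hu, hun, hvp⟩ := (hv.mul hp).exists_eq_smul_of_commute_i
    (by rwa [map_mul, hvn, one_mul]) (by rw [mul_assoc, hi, ← mul_assoc, hvy, mul_assoc])
    ((hv.mul hy₂).mul hv.star)
    (by rw [mul_assoc, hj, mul_assoc, mul_assoc, ← mul_assoc (star v), hvv, one_mul])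
  refine ⟨r, star v * u, hv.star.mul hu, by simp [hun, hvn], ?_⟩
  calc p = star v * (v * p) := by rw [← mul_assoc, hvv, one_mul]
    _ = (r : ℚ) • (star v * u) := by rw [hvp, mul_smul_comm]

theorem IsHurwitz.exists_normSq_eq_two_mul_add_one_of_mul {a p b : ℍ[ℚ]} (ha : IsHurwitz a)
    (hp : IsHurwitz p) (hb : IsHurwitz b) (h : ∃ k : ℤ, normSq (a * p * b) = 2 * k + 1) :
    ∃ k : ℤ, normSq p = 2 * k + 1 := by
  obtain ⟨k, hk⟩ := h
  obtain ⟨A, hA⟩ := ha.exists_normSq_eq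
  obtain ⟨P, hP⟩ := hp.exists_normSq_eq
  obtain ⟨B, hB⟩ := hb.exists_normSq_eq
  have hAPB : A * P * B = 2 * k + 1 := by
    rw [map_mul, map_mul, hA, hP, hB] at hk
    exact_mod_cast hk
  obtain ⟨m, hm⟩ := (Int.odd_mul.1 (Int.odd_mul.1 ⟨k, hAPB⟩).1).2
  exact ⟨m, by rw [hP, hm]; push_cast; ring⟩

theorem HurwitzPrimitive.natAbs_le_one {q x : ℍ[ℚ]} (hq : HurwitzPrimitive q)
    (hx : IsHurwitz x) {r : ℤ} (hqr : q = (r : ℚ) • x) : r.natAbs ≤ 1 := by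
  by_contra hr
  rcases (by omega : 1 < r ∨ 1 < -r) with hr | hr
  · exact hq r hr ⟨x, hx, hqr⟩
  · exact hq (-r) hr ⟨-x, hx.neg, by rw [hqr]; push_cast; rw [neg_smul, smul_neg, neg_neg]⟩

theorem hurwitzReduced_of_primitive_of_odd {q : ℍ[ℚ]} (hprim : HurwitzPrimitive q)
    (hodd : ∃ k : ℤ, normSq q = 2 * k + 1) : HurwitzReduced q := by
  rintro p a b hp ha hb rfl htwo
  have hpodd := ha.exists_normSq_eq_two_mul_add_one_of_mul hp hb hodd
  obtain ⟨r, u, hu, hun, rfl⟩ := exists_eq_smul_of_generatesTwoSided hp hpodd htwo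
  have hr := hprim.natAbs_le_one ((ha.mul hu).mul hb)
    (by rw [mul_smul_comm, smul_mul_assoc])
  have hr0 : r ≠ 0 := by
    rintro rfl
    exact ne_zero_of_normSq_eq_two_mul_add_one hpodd (zero_smul ℚ u)
  refine (hurwitzUnit_iff hp).2 ?_
  rcases (by omega : r = 1 ∨ r = -1) with rfl | rfl <;> simp [hun]

/-- An element `q` of the Hurwitz order `𝕁` is `𝕁`-reduced if and only if `q` is
`𝕁`-primitive and its reduced norm `nr(q)` is odd. -/
theorem stmt18 (q : ℍ[ℚ]) (hq : IsHurwitz q) :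
    HurwitzReduced q ↔ HurwitzPrimitive q ∧ ∃ k : ℤ, normSq q = 2 * k + 1 :=
  ⟨fun h => ⟨h.hurwitzPrimitive, h.exists_normSq_eq_two_mul_add_one hq⟩,
    fun ⟨hprim, hodd⟩ => hurwitzReduced_of_primitive_of_odd hprim hodd⟩
end

section
/- Let M, N, O be three maximal orders of a quaternion division algebra ℍ(K) over a number field K. If O ∩ M = O ∩ N, then M = N. -/
/-!
Let `E = O ∩ M` and let `J = {x | O x ⊆ E}` be the largest left `O`-ideal contained in `E`.
If `P` is any order with `O ∩ P = E`, then `V = J P` is a lattice that is closed under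
multiplication and under left multiplication by `O`; since `O + V O` is then an order containing
`O`, maximality of `O` forces `V ⊆ O`, and therefore `J P ⊆ J`. So `P` lies in the right order
of `J`, which is again an order because `J` contains a nonzero scalar. By maximality, both `M`
and `N` are equal to this right order.
-/

open Quaternion NumberField

namespace Submodule

variable {R A : Type*} [CommRing R] [Ring A] [Algebra R A]

def rightOrder (J : Submodule R A) : Subalgebra R A where
  carrier := {y | ∀ x ∈ J, x * y ∈ J}
  mul_mem' hy hz x hx := by rw [← mul_assoc]; exact hz _ (hy x hx)
  add_mem' hy hz x hx := by rw [mul_add]; exact J.add_mem (hy x hx) (hz x hx)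
  algebraMap_mem' r x hx := by rw [← Algebra.commutes, ← Algebra.smul_def]; exact J.smul_mem r hx

theorem rightOrder_fg [IsNoetherianRing R] {J : Submodule R A} (hJ : J.FG) {d : R}
    (hd : IsSMulRegular A d) (hdJ : algebraMap R A d ∈ J) :
    (Subalgebra.toSubmodule J.rightOrder).FG := by
  refine fg_of_fg_map_injective (LinearMap.lsmul R A d) hd (hJ.of_le ?_)
  rintro _ ⟨y, hy, rfl⟩
  simpa [Algebra.smul_def] using hy _ hdJ

theorem exists_smul_mem_of_span_eq_top {R N : Type*} [CommRing R] (S : Submonoid R)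
    (K : Type*) [CommRing K] [Algebra R K] [IsLocalization S K]
    [AddCommGroup N] [Module R N] [Module K N] [IsScalarTower R K N]
    {M : Submodule R N} (hM : span K (M : Set N) = ⊤) {O : Submodule R N} (hO : O.FG) :
    ∃ d ∈ S, ∀ x ∈ O, d • x ∈ M := by
  induction O, hO using fg_induction with
  | singleton x =>
    obtain ⟨y, hy, z, rfl⟩ := (IsLocalization.mem_span_iff S).1 (hM ▸ mem_top : x ∈ span K _)
    have hzx : (z : R) • IsLocalization.mk' K 1 z • y ∈ M := by
      rwa [← algebraMap_smul K, smul_smul, IsLocalization.mk'_spec', map_one, one_smul,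
        ← span_eq M]
    refine ⟨z, z.2, fun _ hx ↦ ?_⟩
    obtain ⟨r, rfl⟩ := mem_span_singleton.1 hx
    rw [smul_comm]
    exact M.smul_mem r hzx
  | sup O₁ O₂ _ _ h₁ h₂ =>
    obtain ⟨d₁, hd₁, h₁⟩ := h₁
    obtain ⟨d₂, hd₂, h₂⟩ := h₂
    refine ⟨d₁ * d₂, S.mul_mem hd₁ hd₂, fun _ hx ↦ ?_⟩
    obtain ⟨x₁, hx₁, x₂, hx₂, rfl⟩ := mem_sup.1 hx
    rw [smul_add, mul_comm, mul_smul, mul_comm, mul_smul]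
    exact M.add_mem (M.smul_mem _ (h₁ x₁ hx₁)) (M.smul_mem _ (h₂ x₂ hx₂))

end Submodule

namespace Subalgebra

variable {R A : Type*} [CommRing R] [Ring A] [Algebra R A]

def leftColon (O : Subalgebra R A) (E : Submodule R A) : Submodule R A where
  carrier := {x | ∀ o ∈ O, o * x ∈ E}
  add_mem' hx hy o ho := by rw [mul_add]; exact E.add_mem (hx o ho) (hy o ho)
  zero_mem' o _ := by rw [mul_zero]; exact E.zero_mem
  smul_mem' c x hx o ho := by rw [mul_smul_comm]; exact E.smul_mem c (hx o ho)

theorem leftColon_le (O : Subalgebra R A) (E : Submodule R A) : O.leftColon E ≤ E := fun x hx ↦ by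
  simpa using hx 1 O.one_mem

theorem toSubmodule_mul_leftColon_le (O : Subalgebra R A) (E : Submodule R A) :
    toSubmodule O * O.leftColon E ≤ O.leftColon E :=
  Submodule.mul_le.2 fun o ho x hx o' ho' ↦ by
    rw [← mul_assoc]; exact hx _ (O.mul_mem ho' ho)

theorem algebraMap_mem_leftColon_inf {O M : Subalgebra R A} {d : R}
    (hd : ∀ x ∈ O, d • x ∈ M) : algebraMap R A d ∈ O.leftColon (toSubmodule (O ⊓ M)) :=
  fun o ho ↦ by
    rw [← Algebra.commutes, ← Algebra.smul_def]
    exact ⟨O.smul_mem ho d, hd o ho⟩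

theorem le_toSubmodule_of_maximal_fg {O : Subalgebra R A}
    (hO : Maximal (fun P : Subalgebra R A ↦ (toSubmodule P).FG) O) {V : Submodule R A}
    (hV : V.FG) (hOV : toSubmodule O * V ≤ V) (hVV : V * V ≤ V) : V ≤ toSubmodule O := by
  set 𝔬 := toSubmodule O
  have hOO : 𝔬 * 𝔬 = 𝔬 := O.isIdempotentElem_toSubmodule
  have hmul : (𝔬 ⊔ V * 𝔬) * (𝔬 ⊔ V * 𝔬) ≤ 𝔬 ⊔ V * 𝔬 := by
    rw [Submodule.sup_mul, Submodule.mul_sup, Submodule.mul_sup]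
    refine sup_le (sup_le (hOO.le.trans le_sup_left) ?_) (sup_le ?_ ?_) <;>
      refine le_sup_of_le_right ?_
    · rw [← mul_assoc]; exact mul_le_mul_left hOV _
    · rw [mul_assoc, hOO]
    · calc V * 𝔬 * (V * 𝔬) = V * (𝔬 * V) * 𝔬 := by simp only [mul_assoc]
        _ ≤ V * V * 𝔬 := mul_le_mul_left (mul_le_mul_right hOV _) _
        _ ≤ V * 𝔬 := mul_le_mul_left hVV _
  let O' := (𝔬 ⊔ V * 𝔬).toSubalgebra (Submodule.mem_sup_left O.one_mem)
    fun _ _ hx hy ↦ hmul (Submodule.mul_mem_mul hx hy)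
  have hO' : O' = O := hO.eq_of_ge (hO.1.sup (hV.mul hO.1)) fun _ hx ↦ Submodule.mem_sup_left hx
  intro v hv
  have hv1 : v * 1 ∈ V * 𝔬 := Submodule.mul_mem_mul hv (show (1 : A) ∈ 𝔬 from O.one_mem)
  have hvO' : v ∈ O' := Submodule.mem_sup_right (by rwa [mul_one] at hv1)
  rwa [hO'] at hvO'

theorem maximal_fg_of_span_eq_top (K : Type*) [Semiring K] [Module K A] {O : Subalgebra R A}
    (hOfg : (toSubmodule O).FG) (hOspan : Submodule.span K (O : Set A) = ⊤)
    (hOmax : ∀ O' : Subalgebra R A, (toSubmodule O').FG →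
      Submodule.span K (O' : Set A) = ⊤ → O ≤ O' → O' = O) :
    Maximal (fun P : Subalgebra R A ↦ (toSubmodule P).FG) O :=
  ⟨hOfg, fun O' hO' hle ↦ (hOmax O' hO' (top_unique (hOspan ▸ Submodule.span_mono hle)) hle).le⟩

theorem le_rightOrder_leftColon_inf [IsNoetherianRing R] {O P : Subalgebra R A}
    (hO : Maximal (fun P : Subalgebra R A ↦ (toSubmodule P).FG) O) (hP : (toSubmodule P).FG) :
    P ≤ (O.leftColon (toSubmodule (O ⊓ P))).rightOrder := by
  set J := O.leftColon (toSubmodule (O ⊓ P))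
  set 𝔭 := toSubmodule P
  have hJO : J ≤ toSubmodule O := fun _ hx ↦ (O.leftColon_le _ hx).1
  have hJP : J ≤ 𝔭 := fun _ hx ↦ (O.leftColon_le _ hx).2
  have hPP : 𝔭 * 𝔭 = 𝔭 := P.isIdempotentElem_toSubmodule
  have hV : J * 𝔭 ≤ toSubmodule O := by
    refine le_toSubmodule_of_maximal_fg hO ((hO.1.of_le hJO).mul hP) ?_ ?_
    · rw [← mul_assoc]
      exact mul_le_mul_left (O.toSubmodule_mul_leftColon_le _) _
    · calc J * 𝔭 * (J * 𝔭) ≤ J * 𝔭 * (𝔭 * 𝔭) := mul_le_mul_right (mul_le_mul_left hJP _) _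
        _ = J * 𝔭 := by rw [hPP, mul_assoc, hPP]
  intro m hm x hx o ho
  refine ⟨O.mul_mem ho (hV (Submodule.mul_mem_mul hx hm)), ?_⟩
  rw [← mul_assoc]
  exact P.mul_mem (hx o ho).2 hm

end Subalgebra

theorem stmt19_general {K : Type*} [Field K] [NumberField K]
    (M N O : Subalgebra (𝓞 K) ℍ[K])
    (hMfg : M.toSubmodule.FG) (hNfg : N.toSubmodule.FG) (hOfg : O.toSubmodule.FG)
    (hMspan : Submodule.span K (M : Set ℍ[K]) = ⊤)
    (hOspan : Submodule.span K (O : Set ℍ[K]) = ⊤)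
    (hMmax : ∀ O' : Subalgebra (𝓞 K) ℍ[K], O'.toSubmodule.FG →
      Submodule.span K (O' : Set ℍ[K]) = ⊤ → M ≤ O' → O' = M)
    (hNmax : ∀ O' : Subalgebra (𝓞 K) ℍ[K], O'.toSubmodule.FG →
      Submodule.span K (O' : Set ℍ[K]) = ⊤ → N ≤ O' → O' = N)
    (hOmax : ∀ O' : Subalgebra (𝓞 K) ℍ[K], O'.toSubmodule.FG →
      Submodule.span K (O' : Set ℍ[K]) = ⊤ → O ≤ O' → O' = O)
    (h : O ⊓ M = O ⊓ N) : M = N := by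
  have hO := Subalgebra.maximal_fg_of_span_eq_top K hOfg hOspan hOmax
  set J := O.leftColon (Subalgebra.toSubmodule (O ⊓ M))
  have hMJ : M ≤ J.rightOrder := Subalgebra.le_rightOrder_leftColon_inf hO hMfg
  have hNJ : N ≤ J.rightOrder := by
    simpa only [J, h] using Subalgebra.le_rightOrder_leftColon_inf hO hNfg
  obtain ⟨d, hd, hdO⟩ :=
    Submodule.exists_smul_mem_of_span_eq_top (nonZeroDivisors (𝓞 K)) K
      (M := Subalgebra.toSubmodule M) hMspan hOfg
  have hdreg : IsSMulRegular ℍ[K] d :=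
    (isSMulRegular_algebraMap_iff K).1 ((IsLocalization.map_units K ⟨d, hd⟩).isSMulRegular _)
  have hfg : J.rightOrder.toSubmodule.FG :=
    Submodule.rightOrder_fg (hOfg.of_le fun _ hx ↦ (O.leftColon_le _ hx).1) hdreg
      (Subalgebra.algebraMap_mem_leftColon_inf hdO)
  have hspan : Submodule.span K (J.rightOrder : Set ℍ[K]) = ⊤ :=
    top_unique (hMspan ▸ Submodule.span_mono hMJ)
  exact (hMmax _ hfg hspan hMJ).symm.trans (hNmax _ hfg hspan hNJ)

/-- Let `M`, `N`, `O` be three maximal orders of a quaternion division algebra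
`ℍ(K)` over a number field `K`. If `O ∩ M = O ∩ N`, then `M = N`. -/
theorem stmt19 {K : Type*} [Field K] [NumberField K]
    (hdiv : ∀ x : ℍ[K], x ≠ 0 → ∃ y : ℍ[K], x * y = 1 ∧ y * x = 1)
    (M N O : Subalgebra (𝓞 K) ℍ[K])
    (hMfg : M.toSubmodule.FG) (hNfg : N.toSubmodule.FG) (hOfg : O.toSubmodule.FG)
    (hMspan : Submodule.span K (M : Set ℍ[K]) = ⊤)
    (hNspan : Submodule.span K (N : Set ℍ[K]) = ⊤)
    (hOspan : Submodule.span K (O : Set ℍ[K]) = ⊤)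
    (hMmax : ∀ O' : Subalgebra (𝓞 K) ℍ[K], O'.toSubmodule.FG →
      Submodule.span K (O' : Set ℍ[K]) = ⊤ → M ≤ O' → O' = M)
    (hNmax : ∀ O' : Subalgebra (𝓞 K) ℍ[K], O'.toSubmodule.FG →
      Submodule.span K (O' : Set ℍ[K]) = ⊤ → N ≤ O' → O' = N)
    (hOmax : ∀ O' : Subalgebra (𝓞 K) ℍ[K], O'.toSubmodule.FG →
      Submodule.span K (O' : Set ℍ[K]) = ⊤ → O ≤ O' → O' = O)
    (h : O ⊓ M = O ⊓ N) : M = N :=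
  stmt19_general M N O hMfg hNfg hOfg hMspan hOspan hMmax hNmax hOmax h
end
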